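/- arXiv:2411.06280 — 8 statements merged into one kernel-verified Lean document; each statement's English description precedes it below -/
import Mathlib

section
/- For every ε ∈ (0,1) there exists a family of vertex sets V_p ⊆ ℕ×ℕ, indexed by p ∈ (0,1), such that, setting X_p = {x ∈ {0,1}^ℕ : (S_n(x), n − S_n(x)) ∈ V_p for all n ∈ ℕ}, one has: (1) ν_p(X_p) > 1 − ε for every p ∈ (0,1); and (2) X_p ∩ X_q = ∅ whenever p ≠ q in (0,1). (Each X_p is the path space of the vertex subdiagram of the Pascal-Bratteli diagram supported on V_p.) -/
open MeasureTheory
open scoped ENNReal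

/-- `S x n` is the number of `1`s (i.e. `true`s) among the first `n` coordinates of `x`. -/
def S (x : ℕ → Bool) (n : ℕ) : ℕ := ∑ k ∈ Finset.range n, if x k then 1 else 0

/-- The vertex of level `n` visited by the path `x`. -/
def vtx (x : ℕ → Bool) (n : ℕ) : ℕ × ℕ := (S x n, n - S x n)

/-- `ν` is the Bernoulli product measure on `{0,1}^ℕ` with parameter `p`:
cylinder sets get the obvious product measure. -/
def IsBernoulli (p : ℝ) (ν : Measure (ℕ → Bool)) : Prop :=
  ∀ (n : ℕ) (w : ℕ → Bool),
    ν {x | ∀ k < n, x k = w k} =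
      ENNReal.ofReal (p ^ (S w n) * (1 - p) ^ (n - S w n))

def cnt {n : ℕ} (v : Fin n → Bool) : ℕ := ∑ i, if v i then 1 else 0

def ext' {n : ℕ} (v : Fin n → Bool) : ℕ → Bool := fun k => if h : k < n then v ⟨k, h⟩ else false

lemma S_eq_cnt {n : ℕ} (x : ℕ → Bool) (v : Fin n → Bool) (h : ∀ k < n, x k = ext' v k) :
    S x n = cnt v := by
  unfold S cnt
  rw [Finset.sum_range fun k => if x k then 1 else 0]
  refine Finset.sum_congr rfl fun i _ => ?_
  rw [h i i.isLt]
  unfold ext'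
  rw [dif_pos i.isLt]

lemma cyl_measurable {n : ℕ} (w : ℕ → Bool) :
    MeasurableSet {x : ℕ → Bool | ∀ k < n, x k = w k} := by
  have : {x : ℕ → Bool | ∀ k < n, x k = w k} =
      ⋂ k, ⋂ (_ : k < n), (fun x : ℕ → Bool => x k) ⁻¹' {w k} := by
    ext x; simp [Set.mem_iInter]
  rw [this]
  exact MeasurableSet.iInter fun k => MeasurableSet.iInter fun _ =>
    measurable_pi_apply k (MeasurableSet.singleton _)

lemma binom_var (p : ℝ) (n : ℕ) :
    ∑ k ∈ Finset.range (n+1),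
      (n.choose k : ℝ) * p^k * (1-p)^(n-k) * ((k:ℝ) - p*n)^2 = n * p * (1-p) := by
  have h := congrArg (Polynomial.eval p) (bernsteinPolynomial.variance (R := ℝ) n)
  simp only [Polynomial.eval_finset_sum, Polynomial.eval_mul, Polynomial.eval_pow,
    Polynomial.eval_sub, Polynomial.eval_smul, Polynomial.eval_X, Polynomial.eval_natCast,
    Polynomial.eval_one, bernsteinPolynomial, smul_eq_mul, nsmul_eq_mul] at h
  rw [← h]
  refine Finset.sum_congr rfl fun k _ => ?_
  ring

lemma cnt_le {n : ℕ} (v : Fin n → Bool) : cnt v ≤ n := by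
  calc cnt v ≤ ∑ i : Fin n, 1 := Finset.sum_le_sum (fun i _ => by split <;> simp)
  _ = n := by simp

lemma cnt_eq_card {n : ℕ} (v : Fin n → Bool) :
    cnt v = (Finset.univ.filter (fun i => v i = true)).card := by
  rw [Finset.card_filter]; rfl

lemma card_cnt (n k : ℕ) :
    (Finset.univ.filter (fun v : Fin n → Bool => cnt v = k)).card = n.choose k := by
  have hc : (Finset.powersetCard k (Finset.univ : Finset (Fin n))).card = n.choose k := by
    rw [Finset.card_powersetCard]; simp
  rw [← hc]
  refine Finset.card_bij' (fun v _ => Finset.univ.filter (fun i => v i = true))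
      (fun s _ => fun i => decide (i ∈ s)) ?hi ?hj ?li ?ri
  case hi =>
    intro v hv
    simp only [Finset.mem_filter, Finset.mem_univ, true_and] at hv
    simp [Finset.mem_powersetCard, ← cnt_eq_card, hv]
  case hj =>
    intro s hs
    simp only [Finset.mem_powersetCard] at hs
    simp only [Finset.mem_filter, Finset.mem_univ, true_and, cnt_eq_card]
    rw [← hs.2]
    congr 1
    ext i
    simp
  case li =>
    intro v hv
    funext i
    simp
  case ri =>
    intro s hs
    ext i
    simp

/-- group a sum over words by number of ones -/
lemma sum_words (n : ℕ) (f : ℕ → ℝ) :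
    ∑ v : Fin n → Bool, f (cnt v) = ∑ k ∈ Finset.range (n+1), (n.choose k : ℝ) * f k := by
  rw [← Finset.sum_fiberwise_of_maps_to (g := fun v : Fin n → Bool => cnt v)
    (t := Finset.range (n+1)) (fun v _ => Finset.mem_range.2 (Nat.lt_succ_of_le (cnt_le v)))]
  refine Finset.sum_congr rfl fun k _ => ?_
  rw [Finset.sum_congr rfl (fun v hv => by
    rw [(Finset.mem_filter.1 hv).2]), Finset.sum_const, card_cnt, nsmul_eq_mul]

lemma word_var (p : ℝ) (n : ℕ) :
    ∑ v : Fin n → Bool, p^(cnt v) * (1-p)^(n - cnt v) * ((cnt v : ℝ) - p*n)^2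
      = n * p * (1-p) := by
  rw [sum_words n (fun k => p^k * (1-p)^(n-k) * ((k:ℝ) - p*n)^2), ← binom_var p n]
  refine Finset.sum_congr rfl fun k _ => ?_
  ring

lemma cheb (p : ℝ) (hp0 : 0 < p) (hp1 : p < 1) (ν : Measure (ℕ → Bool))
    (hν : IsBernoulli p ν) (n : ℕ) (t : ℝ) (ht : 0 < t) :
    ν {x | t < |((S x n : ℝ)) - p*n|} ≤ ENNReal.ofReal (n * (p*(1-p)) / t^2) := by
  classical
  have h1p : (0:ℝ) ≤ 1 - p := by linarith
  have hPn : ∀ v : Fin n → Bool, 0 ≤ p^(cnt v) * (1-p)^(n - cnt v) :=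
    fun v => mul_nonneg (pow_nonneg hp0.le _) (pow_nonneg h1p _)
  set F : Finset (Fin n → Bool) :=
    Finset.univ.filter (fun v => t < |((cnt v : ℝ)) - p*n|) with hF
  have hE : {x : ℕ → Bool | t < |((S x n : ℝ)) - p*n|}
      = ⋃ v ∈ F, {x | ∀ k < n, x k = ext' v k} := by
    ext x
    simp only [Set.mem_setOf_eq, Set.mem_iUnion]
    constructor
    · intro hx
      refine ⟨fun i => x i, ?_, fun k hk => ?_⟩
      · have : S x n = cnt (fun i : Fin n => x i) :=
          S_eq_cnt x _ (fun k hk => by simp [ext', hk])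
        simp only [hF, Finset.mem_filter, Finset.mem_univ, true_and, ← this]
        exact hx
      · simp [ext', hk]
    · rintro ⟨v, hv, hxv⟩
      rw [S_eq_cnt x v hxv]
      simp only [hF, Finset.mem_filter, Finset.mem_univ, true_and] at hv
      exact hv
  have hmeas : ∀ v ∈ F, MeasurableSet {x : ℕ → Bool | ∀ k < n, x k = ext' v k} :=
    fun v _ => cyl_measurable _
  have hdisj : (F : Set (Fin n → Bool)).PairwiseDisjoint
      (fun v => {x : ℕ → Bool | ∀ k < n, x k = ext' v k}) := by
    intro v _ w _ hvw
    refine Set.disjoint_left.2 fun x hxv hxw => hvw ?_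
    funext i
    have h1 := hxv i i.isLt
    have h2 := hxw i i.isLt
    have e1 : ext' v (i : ℕ) = v i := by simp [ext', i.isLt]
    have e2 : ext' w (i : ℕ) = w i := by simp [ext', i.isLt]
    rw [e1] at h1; rw [e2] at h2
    rw [← h1, ← h2]
  rw [hE, measure_biUnion_finset hdisj hmeas]
  have hterm : ∀ v ∈ F, ν {x : ℕ → Bool | ∀ k < n, x k = ext' v k}
      = ENNReal.ofReal (p^(cnt v) * (1-p)^(n - cnt v)) := by
    intro v _
    have hc : S (ext' v) n = cnt v := S_eq_cnt _ v (fun k hk => rfl)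
    rw [hν n (ext' v), hc]
  rw [Finset.sum_congr rfl hterm, ← ENNReal.ofReal_sum_of_nonneg (fun v _ => hPn v)]
  apply ENNReal.ofReal_le_ofReal
  have key : ∑ v ∈ F, p^(cnt v) * (1-p)^(n - cnt v)
      ≤ (∑ v : Fin n → Bool, p^(cnt v) * (1-p)^(n - cnt v) * ((cnt v : ℝ) - p*n)^2) / t^2 := by
    rw [Finset.sum_div]
    calc ∑ v ∈ F, p^(cnt v) * (1-p)^(n - cnt v)
        ≤ ∑ v ∈ F, p^(cnt v) * (1-p)^(n - cnt v) * ((cnt v : ℝ) - p*n)^2 / t^2 := by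
          refine Finset.sum_le_sum fun v hv => ?_
          have hbad : t < |((cnt v : ℝ)) - p*n| :=
            (Finset.mem_filter.1 hv).2
          have h1 : t^2 ≤ ((cnt v : ℝ) - p*n)^2 := by
            calc t^2 ≤ |((cnt v : ℝ)) - p*n|^2 := by
                  apply pow_le_pow_left₀ ht.le hbad.le
            _ = ((cnt v : ℝ) - p*n)^2 := sq_abs _
          have hP : (0:ℝ) ≤ p^(cnt v) * (1-p)^(n - cnt v) := hPn v
          rw [le_div_iff₀ (by positivity)]
          calc p^(cnt v) * (1-p)^(n - cnt v) * t^2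
              ≤ p^(cnt v) * (1-p)^(n - cnt v) * ((cnt v : ℝ) - p*n)^2 := by
                exact mul_le_mul_of_nonneg_left h1 hP
          _ = _ := rfl
    _ ≤ ∑ v : Fin n → Bool, p^(cnt v) * (1-p)^(n - cnt v) * ((cnt v : ℝ) - p*n)^2 / t^2 := by
          apply Finset.sum_le_sum_of_subset_of_nonneg (Finset.subset_univ F)
          intro v _ _
          have := hPn v
          positivity
  calc ∑ v ∈ F, p^(cnt v) * (1-p)^(n - cnt v) ≤ _ := key
  _ = n * (p*(1-p)) / t^2 := by rw [word_var]; ring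

lemma S_le (x : ℕ → Bool) (n : ℕ) : S x n ≤ n := by
  calc S x n ≤ ∑ _k ∈ Finset.range n, 1 :=
    Finset.sum_le_sum (fun k _ => by split <;> simp)
  _ = n := by simp

lemma vtx_sum (x : ℕ → Bool) (n : ℕ) : (vtx x n).1 + (vtx x n).2 = n := by
  simp only [vtx]
  exact Nat.add_sub_cancel' (S_le x n)


/-- for every `ε ∈ (0,1)` there is a family of vertex sets `V p ⊆ ℕ × ℕ`,
`p ∈ (0,1)`, such that the path spaces `X p` of the corresponding vertex subdiagrams of the
Pascal-Bratteli diagram satisfy `ν_p (X p) > 1 - ε` and are pairwise disjoint. -/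
theorem pascal_disjoint_subdiagrams (ε : ℝ) (hε0 : 0 < ε) (hε1 : ε < 1) :
    ∃ V : ℝ → Set (ℕ × ℕ),
      (∀ p : ℝ, p ∈ Set.Ioo (0 : ℝ) 1 → ∀ ν : Measure (ℕ → Bool), IsBernoulli p ν →
        ν {x : ℕ → Bool | ∀ n : ℕ, vtx x n ∈ V p} > ENNReal.ofReal (1 - ε)) ∧
      (∀ p q : ℝ, p ∈ Set.Ioo (0 : ℝ) 1 → q ∈ Set.Ioo (0 : ℝ) 1 → p ≠ q →
        {x : ℕ → Bool | ∀ n : ℕ, vtx x n ∈ V p} ∩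
          {x : ℕ → Bool | ∀ n : ℕ, vtx x n ∈ V q} = ∅) := by
  set C : ℝ := ε⁻¹ with hC
  have hCpos : 0 < C := by positivity
  refine ⟨fun p => {v : ℕ × ℕ | ∀ j : ℕ, v.1 + v.2 = 16^j →
    |(v.1 : ℝ) - p * (16:ℝ)^j| ≤ C * (8:ℝ)^j}, ?_, ?_⟩
  · -- measure bound
    rintro p ⟨hp0, hp1⟩ ν hν
    set X := {x : ℕ → Bool | ∀ n : ℕ, vtx x n ∈ {v : ℕ × ℕ | ∀ j : ℕ, v.1 + v.2 = 16^j →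
      |(v.1 : ℝ) - p * (16:ℝ)^j| ≤ C * (8:ℝ)^j}} with hX
    set B : ℕ → Set (ℕ → Bool) :=
      fun j => {x | C * (8:ℝ)^j < |((S x (16^j) : ℝ)) - p * (16^j : ℕ)|} with hBdef
    -- the complement of the union of bad events is contained in X
    have hXU : (⋃ j, B j)ᶜ ⊆ X := by
      intro x hx
      simp only [Set.mem_compl_iff, Set.mem_iUnion, not_exists, hBdef,
        Set.mem_setOf_eq, not_lt] at hx
      intro n j hj
      have hn : n = 16^j := by rw [← vtx_sum x n]; exact hj
      subst hn
      have := hx j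
      simpa [vtx] using this
    -- each bad event is small
    have hB : ∀ j : ℕ, ν (B j) ≤ ENNReal.ofReal ((ε^2/4) * (1/4:ℝ)^j) := by
      intro j
      have ht : (0:ℝ) < C * (8:ℝ)^j := by positivity
      refine le_trans (cheb p hp0 hp1 ν hν (16^j) (C * (8:ℝ)^j) ht) ?_
      apply ENNReal.ofReal_le_ofReal
      have hpq : p * (1-p) ≤ 1/4 := by nlinarith [sq_nonneg (p - 1/2)]
      have e1 : ((8:ℝ)^j)^2 = 16^j * 4^j := by
        rw [← pow_mul, mul_comm j 2, pow_mul, ← mul_pow]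
        norm_num
      have h16 : (0:ℝ) < (16:ℝ)^j := by positivity
      have h4 : (0:ℝ) < (4:ℝ)^j := by positivity
      have h44 : ((1:ℝ)/4)^j * (4:ℝ)^j = 1 := by rw [← mul_pow]; norm_num
      rw [div_le_iff₀ (by positivity)]
      have hCe : C^2 = (ε^2)⁻¹ := by rw [hC]; rw [← inv_pow]
      have hε2 : (0:ℝ) < ε^2 := by positivity
      have expand : ε ^ 2 / 4 * (1 / 4:ℝ) ^ j * (C * 8 ^ j) ^ 2
          = (1/4) * (16:ℝ)^j := by
        rw [mul_pow, e1, hCe]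
        have e2 : ε ^ 2 / 4 * (1/4:ℝ)^j * ((ε^2)⁻¹ * (16^j * 4^j))
            = (ε^2 * (ε^2)⁻¹) * ((1/4:ℝ)^j * 4^j) * 16^j / 4 := by ring
        rw [e2, h44, mul_inv_cancel₀ (ne_of_gt hε2)]
        ring
      rw [expand]
      push_cast
      nlinarith [h16, hpq]
    -- total mass of bad events
    have hU : ν (⋃ j, B j) ≤ ENNReal.ofReal (ε^2/3) := by
      refine le_trans (measure_iUnion_le B) ?_
      have hsum : ∑' j : ℕ, ν (B j) ≤ ∑' j : ℕ,
          ENNReal.ofReal ((ε^2/4) * (1/4:ℝ)^j) := ENNReal.tsum_le_tsum hB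
      refine le_trans hsum ?_
      have : ∀ j : ℕ, ENNReal.ofReal ((ε^2/4) * (1/4:ℝ)^j)
          = ENNReal.ofReal (ε^2/4) * (ENNReal.ofReal (1/4:ℝ))^j := by
        intro j
        rw [ENNReal.ofReal_mul (by positivity), ENNReal.ofReal_pow (by norm_num)]
      rw [tsum_congr this, ENNReal.tsum_mul_left, ENNReal.tsum_geometric]
      have h14 : (1:ℝ≥0∞) - ENNReal.ofReal (1/4) = ENNReal.ofReal (3/4) := by
        rw [← ENNReal.ofReal_one, ← ENNReal.ofReal_sub _ (by norm_num : (0:ℝ) ≤ 1/4)]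
        norm_num
      rw [h14, ← ENNReal.ofReal_inv_of_pos (by norm_num), ← ENNReal.ofReal_mul (by positivity)]
      apply ENNReal.ofReal_le_ofReal
      rw [show ((3:ℝ)/4)⁻¹ = 4/3 by norm_num]
      nlinarith
    -- total mass is 1
    have hν1 : ν Set.univ = 1 := by
      have h0 := hν 0 (fun _ => false)
      have : {x : ℕ → Bool | ∀ k < 0, x k = false} = Set.univ := by
        ext x; simp
      rw [this] at h0
      rw [h0]
      simp [S]
    -- assemble
    have hsub : (Set.univ : Set (ℕ → Bool)) ⊆ X ∪ (⋃ j, B j) := by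
      intro x _
      by_cases hx : x ∈ ⋃ j, B j
      · exact Or.inr hx
      · exact Or.inl (hXU hx)
    have h1 : (1:ℝ≥0∞) ≤ ν X + ν (⋃ j, B j) := by
      calc (1:ℝ≥0∞) = ν Set.univ := hν1.symm
      _ ≤ ν (X ∪ ⋃ j, B j) := measure_mono hsub
      _ ≤ ν X + ν (⋃ j, B j) := measure_union_le _ _
    have key : ENNReal.ofReal (1 - ε^2/3) ≤ ν X := by
      have e : ENNReal.ofReal (1 - ε^2/3) = 1 - ENNReal.ofReal (ε^2/3) := by
        rw [← ENNReal.ofReal_one, ← ENNReal.ofReal_sub _ (by positivity)]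
      rw [e]
      calc (1:ℝ≥0∞) - ENNReal.ofReal (ε^2/3) ≤ 1 - ν (⋃ j, B j) := tsub_le_tsub_left hU 1
      _ ≤ ν X := tsub_le_iff_right.2 h1
    refine lt_of_lt_of_le ?_ key
    rw [ENNReal.ofReal_lt_ofReal_iff (by nlinarith)]
    nlinarith
  · -- disjointness
    rintro p q ⟨hp0, hp1⟩ ⟨hq0, hq1⟩ hpq
    ext x
    simp only [Set.mem_inter_iff, Set.mem_setOf_eq, Set.mem_empty_iff_false, iff_false, not_and]
    intro hxp hxq
    exfalso
    have hd : (0:ℝ) < |p - q| := abs_pos.2 (sub_ne_zero.2 hpq)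
    have hbound : ∀ j : ℕ, |p - q| * (16:ℝ)^j ≤ 2 * C * (8:ℝ)^j := by
      intro j
      have h1 := hxp (16^j) j (vtx_sum x (16^j))
      have h2 := hxq (16^j) j (vtx_sum x (16^j))
      have : |p - q| * (16:ℝ)^j = |p * (16:ℝ)^j - q * (16:ℝ)^j| := by
        rw [← sub_mul, abs_mul, abs_of_pos (by positivity : (0:ℝ) < (16:ℝ)^j)]
      rw [this]
      calc |p * (16:ℝ)^j - q * (16:ℝ)^j|
          ≤ |p * (16:ℝ)^j - ((vtx x (16^j)).1 : ℝ)| + |((vtx x (16^j)).1 : ℝ) - q * (16:ℝ)^j| :=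
            abs_sub_le _ _ _
      _ ≤ C * (8:ℝ)^j + C * (8:ℝ)^j := by
            rw [abs_sub_comm] at h1
            exact add_le_add h1 h2
      _ = 2 * C * (8:ℝ)^j := by ring
    obtain ⟨j, hj⟩ := pow_unbounded_of_one_lt ((2*C)/|p-q|) (by norm_num : (1:ℝ) < 2)
    have h16 : (16:ℝ)^j = (8:ℝ)^j * (2:ℝ)^j := by rw [← mul_pow]; norm_num
    have := hbound j
    rw [h16] at this
    have h8 : (0:ℝ) < (8:ℝ)^j := by positivity
    have : |p - q| * (2:ℝ)^j ≤ 2 * C := by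
      nlinarith [this, h8]
    rw [div_lt_iff₀ hd] at hj
    nlinarith
end

section
/- There exists an order ω on the Pascal-Bratteli diagram such that both the set of ω-minimal infinite paths and the set of ω-maximal infinite paths in {0,1}^ℕ have the cardinality of the continuum (2^ℵ₀). -/
/-- The path `x` is minimal for the order `ω`: for every `n`, either the vertex `v_{n+1}(x)`
has a zero coordinate, or the step `x n` is the minimal incoming edge of `v_{n+1}(x)`. -/
def IsMinPath (ω : ℕ × ℕ → Bool) (x : ℕ → Bool) : Prop :=
  ∀ n : ℕ, S x (n + 1) = 0 ∨ (n + 1) - S x (n + 1) = 0 ∨ x n = ω (vtx x (n + 1))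

/-- The path `x` is maximal for the order `ω`. -/
def IsMaxPath (ω : ℕ × ℕ → Bool) (x : ℕ → Bool) : Prop :=
  ∀ n : ℕ, S x (n + 1) = 0 ∨ (n + 1) - S x (n + 1) = 0 ∨ x n = !ω (vtx x (n + 1))

namespace PascalAux

/-- The `k`-th "weight bit": the `(k-3)`-th bit of `y` (shifted by 3). -/
def bitv (y : ℕ → Bool) (k : ℕ) : ℕ := if 3 ≤ k ∧ y (k - 3) = true then 1 else 0

/-- `rr y k` is the binary number with bits `bitv y 0, …, bitv y (k-1)` (MSB first). -/
def rr (y : ℕ → Bool) (k : ℕ) : ℕ := ∑ j ∈ Finset.range k, bitv y j * 2 ^ (k - 1 - j)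

/-- The number of `false`s in the path encoded by `y`, at time `t`. -/
def Z (y : ℕ → Bool) (t : ℕ) : ℕ :=
  rr y (Nat.log 4 (t + 1)) +
    min (t + 1 - 4 ^ Nat.log 4 (t + 1))
      (rr y (Nat.log 4 (t + 1)) + bitv y (Nat.log 4 (t + 1)))

def mval (n : ℕ) : ℕ := n - 4 ^ Nat.log 4 n

/-- The order on the Pascal-Bratteli diagram. -/
def om (v : ℕ × ℕ) : Bool :=
  if v.2 ≤ v.1 then decide (v.2 ≤ 2 * mval (v.1 + v.2))
  else decide (v.1 ≤ 2 * mval (v.1 + v.2))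

/-- The minimal path encoded by `y`. -/
def fmin (y : ℕ → Bool) (t : ℕ) : Bool := decide (Z y (t + 1) = Z y t)

/-- The maximal path encoded by `y`. -/
def fmax (y : ℕ → Bool) (t : ℕ) : Bool := !(fmin y t)

lemma bitv_le (y : ℕ → Bool) (k : ℕ) : bitv y k ≤ 1 := by
  unfold bitv; split <;> simp

lemma bitv_zero (y : ℕ → Bool) {k : ℕ} (h : k < 3) : bitv y k = 0 := by
  unfold bitv; rw [if_neg]; omega

lemma rr_succ (y : ℕ → Bool) (k : ℕ) : rr y (k + 1) = 2 * rr y k + bitv y k := by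
  unfold rr
  rw [Finset.sum_range_succ]
  have h1 : ∀ j ∈ Finset.range k, bitv y j * 2 ^ (k + 1 - 1 - j) = 2 * (bitv y j * 2 ^ (k - 1 - j)) := by
    intro j hj
    rw [Finset.mem_range] at hj
    have : k + 1 - 1 - j = (k - 1 - j) + 1 := by omega
    rw [this, pow_succ]; ring
  rw [Finset.sum_congr rfl h1, ← Finset.mul_sum]
  have : k + 1 - 1 - k = 0 := by omega
  rw [this, pow_zero, mul_one]

lemma rr_lt (y : ℕ → Bool) (k : ℕ) : rr y k < 2 ^ k := by
  induction k with
  | zero => simp [rr]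
  | succ k ih =>
    have := bitv_le y k
    rw [rr_succ, pow_succ]
    omega

lemma rr_zero3 (y : ℕ → Bool) {k : ℕ} (h : k ≤ 3) : rr y k = 0 := by
  unfold rr
  apply Finset.sum_eq_zero
  intro j hj
  rw [Finset.mem_range] at hj
  rw [bitv_zero y (by omega)]
  simp

lemma rr_small (y : ℕ → Bool) {k : ℕ} (h : 3 ≤ k) : 8 * rr y k + 8 ≤ 2 ^ k := by
  induction k with
  | zero => omega
  | succ k ih =>
    rcases Nat.lt_or_ge k 3 with hk | hk
    · interval_cases k
      · omega
      · omega
      · rw [rr_succ, rr_zero3 y (by omega), bitv_zero y (by omega)]; norm_num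
    · have := ih hk
      have := bitv_le y k
      rw [rr_succ, pow_succ]
      omega

lemma four_pow_le (t : ℕ) : 4 ^ Nat.log 4 (t + 1) ≤ t + 1 :=
  Nat.pow_log_le_self 4 (Nat.succ_ne_zero t)

lemma lt_four_pow (t : ℕ) : t + 1 < 4 ^ (Nat.log 4 (t + 1) + 1) :=
  Nat.lt_pow_succ_log_self (by norm_num) _

lemma Z_small (y : ℕ → Bool) (t : ℕ) : 4 * Z y t < t + 2 := by
  set k := Nat.log 4 (t + 1) with hk
  have h1 : 4 ^ k ≤ t + 1 := four_pow_le t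
  have hb := bitv_le y k
  rcases Nat.lt_or_ge k 3 with h3 | h3
  · have hr : rr y k = 0 := rr_zero3 y (by omega)
    have hbz : bitv y k = 0 := bitv_zero y h3
    unfold Z
    rw [← hk, hr, hbz]
    simp
  · have hrs : 8 * rr y k + 8 ≤ 2 ^ k := rr_small y h3
    have h24 : 2 ^ k ≤ 4 ^ k := Nat.pow_le_pow_left (by norm_num) k
    have hZ : Z y t ≤ 2 * rr y k + bitv y k := by
      unfold Z
      rw [← hk]
      have := min_le_right (t + 1 - 4 ^ k) (rr y k + bitv y k)
      omega
    omega

lemma Z_zero (y : ℕ → Bool) : Z y 0 = 0 := by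
  unfold Z
  have h : Nat.log 4 1 = 0 := Nat.log_one_right 4
  rw [h]
  simp [rr]

lemma Z_at_pow (y : ℕ → Bool) (k : ℕ) : Z y (4 ^ k - 1) = rr y k := by
  have h4 : (1:ℕ) ≤ 4 ^ k := Nat.one_le_pow _ _ (by norm_num)
  have ht : 4 ^ k - 1 + 1 = 4 ^ k := by omega
  unfold Z
  rw [ht, Nat.log_pow (by norm_num)]
  simp

/-- The key step lemma: at each step `Z` either stays (a `true` step of the minimal path),
in which case the level coordinate is small, or increases by one, in which case it is large. -/
lemma Z_step (y : ℕ → Bool) (t : ℕ) :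
    (Z y (t + 1) = Z y t ∧ Z y (t + 1) ≤ 2 * mval (t + 1)) ∨
    (Z y (t + 1) = Z y t + 1 ∧ 2 * mval (t + 1) + 1 ≤ Z y (t + 1)) := by
  set k := Nat.log 4 (t + 1) with hk
  have h1 : 4 ^ k ≤ t + 1 := four_pow_le t
  have h2 : t + 1 < 4 ^ (k + 1) := lt_four_pow t
  have hb := bitv_le y k
  have hrlt := rr_lt y k
  have h24 : 2 ^ k ≤ 4 ^ k := Nat.pow_le_pow_left (by norm_num) k
  have hmval : mval (t + 1) = t + 1 - 4 ^ k := by unfold mval; rw [← hk]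
  have hZt : Z y t = rr y k + min (t + 1 - 4 ^ k) (rr y k + bitv y k) := by
    unfold Z; rw [← hk]
  rcases Nat.lt_or_ge (t + 2) (4 ^ (k + 1)) with hin | hbd
  · -- in-stage step
    have hk' : Nat.log 4 (t + 2) = k :=
      Nat.log_eq_of_pow_le_of_lt_pow (by omega) hin
    have hZt1 : Z y (t + 1) = rr y k + min (t + 2 - 4 ^ k) (rr y k + bitv y k) := by
      unfold Z; rw [hk']
    set R := rr y k
    set B := bitv y k
    set m := t + 1 - 4 ^ k with hm
    have hm2 : t + 2 - 4 ^ k = m + 1 := by omega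
    rw [hm2] at hZt1
    rcases le_or_gt (R + B) m with hle | hlt
    · left
      constructor
      · rw [hZt1, hZt, min_eq_right hle, min_eq_right (by omega)]
      · rw [hZt1, min_eq_right (by omega), hmval]
        omega
    · right
      constructor
      · rw [hZt1, hZt, min_eq_left (by omega), min_eq_left (by omega)]
        omega
      · rw [hZt1, min_eq_left (by omega), hmval]
        omega
  · -- stage-boundary step: t + 2 = 4 ^ (k + 1)
    have heq : t + 2 = 4 ^ (k + 1) := by omega
    have hk' : Nat.log 4 (t + 2) = k + 1 := by rw [heq, Nat.log_pow (by norm_num)]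
    have hZt1 : Z y (t + 1) = rr y (k + 1) +
        min (t + 2 - 4 ^ (k + 1)) (rr y (k + 1) + bitv y (k + 1)) := by
      unfold Z; rw [hk']
    have hz : t + 2 - 4 ^ (k + 1) = 0 := by omega
    rw [hz] at hZt1
    simp only [Nat.min_def] at hZt1
    rw [if_pos (Nat.zero_le _)] at hZt1
    have hZ1 : Z y (t + 1) = 2 * rr y k + bitv y k := by rw [hZt1, rr_succ]; omega
    have hpow : 4 ^ (k + 1) = 4 * 4 ^ k := by rw [pow_succ]; ring
    have hmin : min (t + 1 - 4 ^ k) (rr y k + bitv y k) = rr y k + bitv y k := by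
      apply min_eq_right
      omega
    left
    constructor
    · rw [hZ1, hZt, hmin]; omega
    · rw [hZ1, hmval]; omega

lemma Z_mono (y : ℕ → Bool) (t : ℕ) :
    Z y (t + 1) = Z y t ∨ Z y (t + 1) = Z y t + 1 := by
  rcases Z_step y t with ⟨h, _⟩ | ⟨h, _⟩
  · exact Or.inl h
  · exact Or.inr h

lemma S_fmin (y : ℕ → Bool) : ∀ t, S (fmin y) t + Z y t = t := by
  intro t
  induction t with
  | zero => simp [S, Z_zero]
  | succ t ih =>
    have hs : S (fmin y) (t + 1) = S (fmin y) t + (if fmin y t then 1 else 0) := by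
      unfold S; rw [Finset.sum_range_succ]
    rcases Z_step y t with ⟨h, _⟩ | ⟨h, _⟩
    · have hf : fmin y t = true := by unfold fmin; simp [h]
      rw [hs, hf]
      simp
      omega
    · have hf : fmin y t = false := by unfold fmin; simp; omega
      rw [hs, hf]
      simp
      omega

lemma S_fmax (y : ℕ → Bool) : ∀ t, S (fmax y) t = Z y t := by
  intro t
  induction t with
  | zero => simp [S, Z_zero]
  | succ t ih =>
    have hs : S (fmax y) (t + 1) = S (fmax y) t + (if fmax y t then 1 else 0) := by
      unfold S; rw [Finset.sum_range_succ]
    rcases Z_step y t with ⟨h, _⟩ | ⟨h, _⟩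
    · have hf : fmax y t = false := by unfold fmax fmin; simp [h]
      rw [hs, hf]
      simp
      omega
    · have hf : fmax y t = true := by unfold fmax fmin; simp; omega
      rw [hs, hf]
      simp
      omega

lemma fmin_isMin (y : ℕ → Bool) : IsMinPath om (fmin y) := by
  intro t
  right; right
  have hS1 : S (fmin y) (t + 1) + Z y (t + 1) = t + 1 := S_fmin y (t + 1)
  have hsmall : 4 * Z y (t + 1) < t + 3 := Z_small y (t + 1)
  have hv : vtx (fmin y) (t + 1) = (t + 1 - Z y (t + 1), Z y (t + 1)) := by
    unfold vtx
    have : S (fmin y) (t + 1) = t + 1 - Z y (t + 1) := by omega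
    rw [this]
    congr 1
    omega
  rw [hv]
  have hsum : (t + 1 - Z y (t + 1)) + Z y (t + 1) = t + 1 := by omega
  have hreg : Z y (t + 1) ≤ t + 1 - Z y (t + 1) := by omega
  unfold om
  simp only
  rw [if_pos hreg, hsum]
  rcases Z_step y t with ⟨h, h2⟩ | ⟨h, h2⟩
  · have hf : fmin y t = true := by unfold fmin; simp [h]
    rw [hf]
    simp [h2]
  · have hf : fmin y t = false := by unfold fmin; simp; omega
    rw [hf]
    simp
    omega

lemma fmax_isMax (y : ℕ → Bool) : IsMaxPath om (fmax y) := by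
  intro t
  right; right
  have hS1 : S (fmax y) (t + 1) = Z y (t + 1) := S_fmax y (t + 1)
  have hsmall : 4 * Z y (t + 1) < t + 3 := Z_small y (t + 1)
  have hv : vtx (fmax y) (t + 1) = (Z y (t + 1), t + 1 - Z y (t + 1)) := by
    unfold vtx
    rw [hS1]
  rw [hv]
  have hsum : Z y (t + 1) + (t + 1 - Z y (t + 1)) = t + 1 := by omega
  have hreg : ¬ (t + 1 - Z y (t + 1) ≤ Z y (t + 1)) := by omega
  unfold om
  simp only
  rw [if_neg hreg, hsum]
  rcases Z_step y t with ⟨h, h2⟩ | ⟨h, h2⟩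
  · have hf : fmax y t = false := by unfold fmax fmin; simp [h]
    rw [hf]
    simp [h2]
  · have hf : fmax y t = true := by unfold fmax fmin; simp; omega
    rw [hf]
    simp
    omega

lemma fmin_inj : Function.Injective fmin := by
  intro y y' h
  have hZ : ∀ t, Z y t = Z y' t := by
    intro t
    have h1 := S_fmin y t
    have h2 := S_fmin y' t
    rw [h] at h1
    omega
  have hrr : ∀ k, rr y k = rr y' k := by
    intro k
    have := hZ (4 ^ k - 1)
    rwa [Z_at_pow, Z_at_pow] at this
  have hb : ∀ k, bitv y k = bitv y' k := by
    intro k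
    have h1 := hrr k
    have h2 := hrr (k + 1)
    rw [rr_succ, rr_succ] at h2
    omega
  funext n
  have := hb (n + 3)
  unfold bitv at this
  have hn : n + 3 - 3 = n := by omega
  rw [hn] at this
  cases hyn : y n <;> cases hyn' : y' n <;> simp [hyn, hyn'] at this ⊢

lemma fmax_inj : Function.Injective fmax := by
  intro y y' h
  apply fmin_inj
  funext t
  have := congrFun h t
  unfold fmax at this
  exact Bool.not_inj this

lemma mk_arrow_bool : Cardinal.mk (ℕ → Bool) = Cardinal.continuum := by
  rw [← Cardinal.two_power_aleph0]
  rw [← Cardinal.mk_bool, ← Cardinal.mk_nat, Cardinal.power_def]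

end PascalAux

/-- there is an order on the Pascal-Bratteli diagram with continuum many
minimal infinite paths and continuum many maximal infinite paths. -/
theorem pascal_order_continuum_min_max :
    ∃ ω : ℕ × ℕ → Bool,
      Cardinal.mk {x : ℕ → Bool | IsMinPath ω x} = Cardinal.continuum ∧
      Cardinal.mk {x : ℕ → Bool | IsMaxPath ω x} = Cardinal.continuum := by
  refine ⟨PascalAux.om, ?_, ?_⟩
  · apply le_antisymm
    · calc Cardinal.mk {x : ℕ → Bool | IsMinPath PascalAux.om x}
          ≤ Cardinal.mk (ℕ → Bool) := Cardinal.mk_set_le _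
        _ = Cardinal.continuum := PascalAux.mk_arrow_bool
    · rw [← PascalAux.mk_arrow_bool]
      apply Cardinal.mk_le_of_injective
        (f := fun y => (⟨PascalAux.fmin y, PascalAux.fmin_isMin y⟩ :
          {x : ℕ → Bool | IsMinPath PascalAux.om x}))
      intro y y' h
      exact PascalAux.fmin_inj (congrArg Subtype.val h)
  · apply le_antisymm
    · calc Cardinal.mk {x : ℕ → Bool | IsMaxPath PascalAux.om x}
          ≤ Cardinal.mk (ℕ → Bool) := Cardinal.mk_set_le _
        _ = Cardinal.continuum := PascalAux.mk_arrow_bool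
    · rw [← PascalAux.mk_arrow_bool]
      apply Cardinal.mk_le_of_injective
        (f := fun y => (⟨PascalAux.fmax y, PascalAux.fmax_isMax y⟩ :
          {x : ℕ → Bool | IsMaxPath PascalAux.om x}))
      intro y y' h
      exact PascalAux.fmax_inj (congrArg Subtype.val h)
end

section
/- There exists an order ω on the Pascal-Bratteli diagram such that the set of ω-minimal infinite paths in {0,1}^ℕ has the cardinality of the continuum (2^ℵ₀) while the set of ω-maximal infinite paths is countably infinite. -/
/-!
The order is a threshold order: on each level, the minimal incoming edge of `(a, b)` has type `1`
exactly when `a` is at least a threshold depending on the level. From an interior vertex a maximal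
path then has at most one continuation, so a maximal path is determined by the prefix with which it
leaves the boundary, and there are only countably many.

Levels are grouped into blocks `(4 ^ m, 4 ^ (m + 1)]`. On the first `2 ^ m` levels of block `m`
the threshold is `2 s - 1` at offset `s`; on all other levels it is infinite. A minimal path entering
block `m` at height `q < 2 ^ m` climbs until the threshold catches up with it and then may climb once
more or not, leaving the block at height `2 q` or `2 q + 1`; these choices encode an arbitrary
`y : ℕ → Bool`. A path climbing the `a`-axis to level `4 ^ (k + 1)` and then moving right exactly on
the sweep levels `4 ^ m < ℓ ≤ 4 ^ m + 2 ^ m` stays above all thresholds, so there are infinitely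
many maximal paths.
-/

namespace PascalBratteli

open Finset

section PathCount

variable {x x' : ℕ → Bool}

lemma S_eq_card (x : ℕ → Bool) (n : ℕ) : S x n = #{k ∈ range n | x k = true} := by
  simp [S, sum_boole]

lemma S_succ (x : ℕ → Bool) (n : ℕ) : S x (n + 1) = S x n + (x n).toNat := by
  rw [S, sum_range_succ]
  cases x n <;> rfl

lemma S_le (x : ℕ → Bool) (n : ℕ) : S x n ≤ n := by
  simpa [S_eq_card] using card_filter_le (range n) _

lemma S_mono (x : ℕ → Bool) {m n : ℕ} (h : m ≤ n) : S x m ≤ S x n := by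
  simp only [S_eq_card]
  exact card_le_card (filter_subset_filter _ (range_subset_range.mpr h))

lemma S_pos {i n : ℕ} (hi : i < n) (h : x i = true) : 0 < S x n := by
  rw [S_eq_card]
  exact card_pos.mpr ⟨i, by simpa using ⟨hi, h⟩⟩

lemma S_lt {j n : ℕ} (hj : j < n) (h : x j = false) : S x n < n := by
  rw [S_eq_card]
  calc #{k ∈ range n | x k = true} < #(range n) :=
        card_lt_card (filter_ssubset.mpr ⟨j, mem_range.mpr hj, by simp [h]⟩)
    _ = n := card_range n

lemma S_congr {n : ℕ} (h : ∀ i < n, x i = x' i) : S x n = S x' n :=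
  sum_congr rfl fun i hi => by rw [h i (mem_range.mp hi)]

lemma S_add_of_forall_eq_true {a d : ℕ} (h : ∀ i, a ≤ i → i < a + d → x i = true) :
    S x (a + d) = S x a + d := by
  induction d with
  | zero => rfl
  | succ d ih =>
    rw [← add_assoc, S_succ, ih fun i hi hi' => h i hi (by omega), h (a + d) le_self_add (by omega)]
    rfl

def pathOfHeight (A : ℕ → ℕ) (n : ℕ) : Bool := decide (A n < A (n + 1))

lemma S_pathOfHeight {A : ℕ → ℕ} (h0 : A 0 = 0)
    (hA : ∀ n, A n ≤ A (n + 1) ∧ A (n + 1) ≤ A n + 1) (n : ℕ) : S (pathOfHeight A) n = A n := by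
  induction n with
  | zero => simp [S, h0]
  | succ n ih =>
    rw [S_succ, ih]
    have := hA n
    by_cases h : A n < A (n + 1) <;> simp [pathOfHeight, h] <;> omega

lemma vtx_succ (x : ℕ → Bool) (n : ℕ) :
    vtx x (n + 1) = if x n then (S x n + 1, n - S x n) else (S x n, n - S x n + 1) := by
  have := S_le x n
  cases hx : x n <;> simp [vtx, S_succ, hx]; omega

end PathCount

section MaxPaths

variable {ω : ℕ × ℕ → Bool} {x x' : ℕ → Bool}

def IsMonotoneOnLevels (ω : ℕ × ℕ → Bool) : Prop :=
  ∀ a b, ω (a, b + 1) = true → ω (a + 1, b) = true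

lemma IsMaxPath.apply_eq_not_order (hx : IsMaxPath ω x) {n : ℕ} (hpos : 0 < S x n)
    (hlt : S x n < n) : x n = !ω (vtx x (n + 1)) := by
  have := S_succ x n
  have := (x n).toNat_le
  exact (hx n).resolve_left (by omega) |>.resolve_left (by omega)

lemma IsMaxPath.apply_eq_of_interior (hω : IsMonotoneOnLevels ω)
    (hx : IsMaxPath ω x) (hx' : IsMaxPath ω x') {n : ℕ} (hagree : ∀ i < n, x i = x' i)
    (hpos : 0 < S x n) (hlt : S x n < n) : x n = x' n := by
  have hS : S x' n = S x n := (S_congr hagree).symm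
  have h := IsMaxPath.apply_eq_not_order hx hpos hlt
  have h' := IsMaxPath.apply_eq_not_order hx' (hS ▸ hpos) (hS ▸ hlt)
  rw [vtx_succ] at h
  rw [vtx_succ, hS] at h'
  cases hxn : x n <;> cases hx'n : x' n
  · rfl
  · simp only [hxn, hx'n, Bool.false_eq_true, if_false, if_true] at h h'
    simp [hω _ _ (by simpa using h)] at h'
  · simp only [hxn, hx'n, Bool.false_eq_true, if_false, if_true] at h h'
    simp [hω _ _ (by simpa using h')] at h
  · rfl

lemma IsMaxPath.eq_of_eqOn (hω : IsMonotoneOnLevels ω)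
    (hx : IsMaxPath ω x) (hx' : IsMaxPath ω x') {m : ℕ} (hagree : ∀ i < m, x i = x' i)
    {i j : ℕ} (hi : i < m) (hxi : x i = true) (hj : j < m) (hxj : x j = false) : x = x' := by
  funext n
  induction n using Nat.strong_induction_on with
  | _ n ih =>
    rcases lt_or_ge n m with hn | hn
    · exact hagree n hn
    · exact IsMaxPath.apply_eq_of_interior hω hx hx' ih (S_pos (by omega) hxi) (S_lt (by omega) hxj)

theorem countable_setOf_isMaxPath (hω : IsMonotoneOnLevels ω) :
    {x | IsMaxPath ω x}.Countable := by
  let leaving (m : ℕ) : Set (ℕ → Bool) :=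
    {x | IsMaxPath ω x ∧ (∃ i < m, x i = true) ∧ ∃ j < m, x j = false}
  have hleaving (m : ℕ) : (leaving m).Countable := by
    refine Set.MapsTo.countable_of_injOn (f := fun x (i : Fin m) => x i)
      (Set.mapsTo_univ _ _) ?_ Set.countable_univ
    rintro x ⟨hx, ⟨i, hi, hxi⟩, j, hj, hxj⟩ x' ⟨hx', -⟩ h
    exact IsMaxPath.eq_of_eqOn hω hx hx' (fun k hk => congrFun h ⟨k, hk⟩) hi hxi hj hxj
  refine ((Set.countable_range fun b : Bool => fun _ : ℕ => b).union
    (Set.countable_iUnion hleaving)).mono ?_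
  intro x hx
  by_cases hxt : ∃ i, x i = true <;> by_cases hxf : ∃ j, x j = false
  · obtain ⟨i, hxi⟩ := hxt
    obtain ⟨j, hxj⟩ := hxf
    exact Or.inr (Set.mem_iUnion.mpr ⟨i + j + 1, hx, ⟨i, by omega, hxi⟩, j, by omega, hxj⟩)
  all_goals simp only [not_exists, Bool.not_eq_true, Bool.not_eq_false] at hxt hxf
  · exact Or.inl ⟨true, funext fun n => (hxf n).symm⟩
  · exact Or.inl ⟨false, funext fun n => (hxt n).symm⟩
  · exact absurd (hxf 0) (by simp [hxt 0])

end MaxPaths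

/-- Level `ℓ ≥ 2` lies in the block `(4 ^ block ℓ, 4 ^ (block ℓ + 1)]`, at position `offset ℓ`. -/
def block (ℓ : ℕ) : ℕ := Nat.log 4 (ℓ - 1)

def offset (ℓ : ℕ) : ℕ := ℓ - 4 ^ block ℓ

lemma block_pow_add {m j : ℕ} (h1 : 1 ≤ j) (h2 : j ≤ 3 * 4 ^ m) : block (4 ^ m + j) = m := by
  refine Nat.log_eq_of_pow_le_of_lt_pow (by omega) ?_
  rw [pow_succ]
  omega

lemma offset_pow_add {m j : ℕ} (h1 : 1 ≤ j) (h2 : j ≤ 3 * 4 ^ m) : offset (4 ^ m + j) = j := by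
  rw [offset, block_pow_add h1 h2, Nat.add_sub_cancel_left]

lemma exists_eq_pow_add {ℓ : ℕ} (h : 2 ≤ ℓ) : ∃ m j, 1 ≤ j ∧ j ≤ 3 * 4 ^ m ∧ ℓ = 4 ^ m + j := by
  have h1 : 4 ^ Nat.log 4 (ℓ - 1) ≤ ℓ - 1 := Nat.pow_log_le_self 4 (by omega)
  have h2 : ℓ - 1 < 4 ^ (Nat.log 4 (ℓ - 1) + 1) := Nat.lt_pow_succ_log_self (by norm_num) _
  rw [pow_succ] at h2
  exact ⟨Nat.log 4 (ℓ - 1), ℓ - 4 ^ Nat.log 4 (ℓ - 1), by omega, by omega, by omega⟩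

def IsSweepLevel (ℓ : ℕ) : Prop := 1 ≤ offset ℓ ∧ offset ℓ ≤ 2 ^ block ℓ

instance : DecidablePred IsSweepLevel := fun _ => inferInstanceAs (Decidable (_ ∧ _))

lemma isSweepLevel_pow_add {m j : ℕ} (h1 : 1 ≤ j) (h2 : j ≤ 3 * 4 ^ m) :
    IsSweepLevel (4 ^ m + j) ↔ j ≤ 2 ^ m := by
  simp [IsSweepLevel, block_pow_add h1 h2, offset_pow_add h1 h2, h1]

def order (v : ℕ × ℕ) : Bool :=
  decide (IsSweepLevel (v.1 + v.2) ∧ 2 * offset (v.1 + v.2) ≤ v.1 + 1)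

lemma order_add_sub {a ℓ : ℕ} (h : a ≤ ℓ) :
    order (a, ℓ - a) = decide (IsSweepLevel ℓ ∧ 2 * offset ℓ ≤ a + 1) := by
  rw [order, Nat.add_sub_cancel' h]

lemma isMonotoneOnLevels_order : IsMonotoneOnLevels order := by
  intro a b h
  simp only [order, decide_eq_true_eq, show a + 1 + b = a + (b + 1) by omega] at h ⊢
  exact ⟨h.1, by omega⟩

def binaryPrefix (y : ℕ → Bool) : ℕ → ℕ
  | 0 => 0
  | m + 1 => 2 * binaryPrefix y m + (y m).toNat

lemma binaryPrefix_succ (y : ℕ → Bool) (m : ℕ) :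
    binaryPrefix y (m + 1) = 2 * binaryPrefix y m + (y m).toNat := rfl

lemma binaryPrefix_lt (y : ℕ → Bool) (m : ℕ) : binaryPrefix y m < 2 ^ m := by
  induction m with
  | zero => simp [binaryPrefix]
  | succ m ih =>
    have := (y m).toNat_le
    rw [binaryPrefix_succ, pow_succ]
    omega

lemma decide_binaryPrefix_succ_mod_two (y : ℕ → Bool) (m : ℕ) :
    decide (binaryPrefix y (m + 1) % 2 = 1) = y m := by
  cases h : y m <;> simp [binaryPrefix_succ, h]

section MinPaths

variable (y : ℕ → Bool)

/-- Within block `m`, the minimal path coding `y` climbs from height `binaryPrefix y m` to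
`binaryPrefix y (m + 1) = 2 * binaryPrefix y m + (y m).toNat`, one step per level. -/
def minHeight (ℓ : ℕ) : ℕ :=
  min (binaryPrefix y (block ℓ) + offset ℓ) (binaryPrefix y (block ℓ + 1))

lemma minHeight_zero : minHeight y 0 = 0 := by
  simp [minHeight, block, offset, binaryPrefix]

lemma minHeight_pow_add {m j : ℕ} (hj : j ≤ 3 * 4 ^ m) :
    minHeight y (4 ^ m + j) = min (binaryPrefix y m + j) (binaryPrefix y (m + 1)) := by
  rcases Nat.eq_zero_or_pos j with rfl | hj1
  · cases m with
    | zero => simp [minHeight, block, offset, binaryPrefix]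
    | succ m =>
      have h4 : 4 ^ (m + 1) + 0 = 4 ^ m + 3 * 4 ^ m := by ring
      have h24 : 2 ^ m ≤ 4 ^ m := Nat.pow_le_pow_left (by norm_num) m
      have h1 : 1 ≤ 3 * 4 ^ m := by have := Nat.one_le_pow m 4 (by norm_num); omega
      have := binaryPrefix_lt y m
      have := (y m).toNat_le
      rw [h4, minHeight, block_pow_add h1 le_rfl, offset_pow_add h1 le_rfl, add_zero,
        binaryPrefix_succ y (m + 1), binaryPrefix_succ y m, min_eq_right (by omega),
        min_eq_left (by omega)]
  · rw [minHeight, block_pow_add hj1 hj, offset_pow_add hj1 hj]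

lemma minHeight_pow (m : ℕ) : minHeight y (4 ^ m) = binaryPrefix y m := by
  rw [← add_zero (4 ^ m), minHeight_pow_add y (Nat.zero_le _), add_zero, binaryPrefix_succ]
  exact min_eq_left (by omega)

lemma minHeight_one : minHeight y 1 = 0 := minHeight_pow y 0

lemma minHeight_of_succ_eq_pow_add {n m j : ℕ} (h1 : 1 ≤ j) (h2 : j ≤ 3 * 4 ^ m)
    (hn : n + 1 = 4 ^ m + j) :
    minHeight y n = min (binaryPrefix y m + (j - 1)) (binaryPrefix y (m + 1)) ∧
      minHeight y (n + 1) = min (binaryPrefix y m + j) (binaryPrefix y (m + 1)) := by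
  obtain rfl : n = 4 ^ m + (j - 1) := by omega
  exact ⟨minHeight_pow_add y (by omega), hn ▸ minHeight_pow_add y h2⟩

lemma minHeight_le_succ (n : ℕ) :
    minHeight y n ≤ minHeight y (n + 1) ∧ minHeight y (n + 1) ≤ minHeight y n + 1 := by
  rcases Nat.lt_or_ge n 1 with hn | hn
  · obtain rfl : n = 0 := by omega
    simp [minHeight_zero, minHeight_one]
  · obtain ⟨m, j, h1, h2, hℓ⟩ := exists_eq_pow_add (ℓ := n + 1) (by omega)
    rw [(minHeight_of_succ_eq_pow_add y h1 h2 hℓ).1, (minHeight_of_succ_eq_pow_add y h1 h2 hℓ).2]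
    omega

def minPath : ℕ → Bool := pathOfHeight (minHeight y)

lemma S_minPath (n : ℕ) : S (minPath y) n = minHeight y n :=
  S_pathOfHeight (minHeight_zero y) (minHeight_le_succ y) n

lemma minPath_isMinPath : IsMinPath order (minPath y) := by
  intro n
  right; right
  have hle := S_le (minPath y) (n + 1)
  rw [vtx, order_add_sub hle, S_minPath, minPath, pathOfHeight]
  rcases Nat.lt_or_ge n 1 with hn | hn
  · obtain rfl : n = 0 := by omega
    simp [minHeight_zero, minHeight_one, IsSweepLevel, offset, block]
  · obtain ⟨m, j, h1, h2, hℓ⟩ := exists_eq_pow_add (ℓ := n + 1) (by omega)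
    rw [(minHeight_of_succ_eq_pow_add y h1 h2 hℓ).1, (minHeight_of_succ_eq_pow_add y h1 h2 hℓ).2,
      hℓ, offset_pow_add h1 h2]
    simp only [isSweepLevel_pow_add h1 h2]
    have := binaryPrefix_lt y m
    have := (y m).toNat_le
    rw [binaryPrefix_succ, decide_eq_decide]
    omega

end MinPaths

lemma minPath_injective : Function.Injective minPath := by
  intro y y' h
  funext m
  rw [← decide_binaryPrefix_succ_mod_two y, ← decide_binaryPrefix_succ_mod_two y',
    ← minHeight_pow, ← minHeight_pow, ← S_minPath, ← S_minPath, h]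

def maxPath (k n : ℕ) : Bool := if n < 4 ^ (k + 1) then true else !decide (IsSweepLevel (n + 1))

lemma S_maxPath_of_le {k n : ℕ} (hn : n ≤ 4 ^ (k + 1)) : S (maxPath k) n = n := by
  have h := S_add_of_forall_eq_true (x := maxPath k) (a := 0) (d := n)
    fun i _ hi => if_pos (by omega)
  rwa [zero_add, show S (maxPath k) 0 = 0 from rfl, zero_add] at h

/-- The non-sweep levels of block `M - 1` lift `maxPath k` above every threshold of block `M`. -/
lemma two_pow_le_S_maxPath {k M ℓ : ℕ} (hM : k < M) (hℓ : 4 ^ M ≤ ℓ) :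
    2 ^ (M + 1) ≤ S (maxPath k) ℓ := by
  refine le_trans ?_ (S_mono _ hℓ)
  obtain ⟨m, rfl⟩ : ∃ m, M = m + 1 := ⟨M - 1, by omega⟩
  rcases (show k = m ∨ k < m by omega) with rfl | hkm
  · rw [S_maxPath_of_le le_rfl, show (4 : ℕ) = 2 ^ 2 from rfl, ← pow_mul]
    exact Nat.pow_le_pow_right (by norm_num) (by omega)
  have hp : 2 ≤ 2 ^ m := Nat.le_self_pow (by omega) 2
  have hpp : 2 * 2 ^ m ≤ 2 ^ m * 2 ^ m := Nat.mul_le_mul_right _ hp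
  have h4 : 4 ^ m = 2 ^ m * 2 ^ m := by rw [← mul_pow]; norm_num
  have hk : 4 ^ (k + 1) ≤ 4 ^ m := Nat.pow_le_pow_right (by norm_num) hkm
  have hrest : S (maxPath k) (4 ^ m + 2 ^ m + (3 * 4 ^ m - 2 ^ m)) =
      S (maxPath k) (4 ^ m + 2 ^ m) + (3 * 4 ^ m - 2 ^ m) := by
    refine S_add_of_forall_eq_true fun i hi hi' => ?_
    have hni : ¬ IsSweepLevel (4 ^ m + (i + 1 - 4 ^ m)) :=
      fun h => by rw [isSweepLevel_pow_add (by omega) (by omega)] at h; omega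
    rw [maxPath, if_neg (by omega), show 4 ^ m + (i + 1 - 4 ^ m) = i + 1 by omega] at *
    simpa using hni
  calc 2 ^ (m + 1 + 1) = 4 * 2 ^ m := by ring
    _ ≤ 3 * 4 ^ m - 2 ^ m := by rw [h4]; omega
    _ ≤ S (maxPath k) (4 ^ m + 2 ^ m) + (3 * 4 ^ m - 2 ^ m) := Nat.le_add_left _ _
    _ = S (maxPath k) (4 ^ (m + 1)) := by rw [← hrest, pow_succ]; congr 1; omega

lemma maxPath_isMaxPath (k : ℕ) : IsMaxPath order (maxPath k) := by
  intro n
  by_cases hn : n < 4 ^ (k + 1)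
  · exact Or.inr (Or.inl (by rw [S_maxPath_of_le hn]; omega))
  right; right
  have h4 := Nat.one_le_pow (k + 1) 4 (by norm_num)
  obtain ⟨m, j, h1, h2, hℓ⟩ := exists_eq_pow_add (ℓ := n + 1) (by omega)
  have hkm : k < m := by
    have : 4 ^ (k + 1) < 4 ^ (m + 1) := by rw [pow_succ 4 m]; omega
    have := (Nat.pow_lt_pow_iff_right (by norm_num)).mp this
    omega
  have hS := two_pow_le_S_maxPath hkm (ℓ := n + 1) (by omega)
  rw [vtx, order_add_sub (S_le _ _), maxPath, if_neg hn, hℓ, offset_pow_add h1 h2]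
  rw [hℓ] at hS
  simp only [isSweepLevel_pow_add h1 h2, pow_succ] at hS ⊢
  congr 1
  exact decide_eq_decide.mpr ⟨fun h => ⟨h, by omega⟩, And.left⟩

lemma maxPath_injective : Function.Injective maxPath := by
  have key {j k : ℕ} (hjk : j < k) : maxPath j ≠ maxPath k := by
    intro h
    have hlt : 4 ^ (j + 1) < 4 ^ (k + 1) := Nat.pow_lt_pow_right (by norm_num) (by omega)
    have h1 : 1 ≤ 3 * 4 ^ (j + 1) := by have := Nat.one_le_pow (j + 1) 4 (by norm_num); omega
    have := congrFun h (4 ^ (j + 1))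
    simp [maxPath, hlt, isSweepLevel_pow_add le_rfl h1, Nat.one_le_two_pow] at this
  intro j k h
  by_contra hne
  rcases Nat.lt_or_gt_of_ne hne with hlt | hlt
  · exact key hlt h
  · exact key hlt h.symm

end PascalBratteli

open PascalBratteli

/-- there is an order on the Pascal-Bratteli diagram with continuum many
minimal infinite paths and countably infinitely many maximal infinite paths. -/
theorem pascal_order_continuum_min_countable_max :
    ∃ ω : ℕ × ℕ → Bool,
      Cardinal.mk {x : ℕ → Bool | IsMinPath ω x} = Cardinal.continuum ∧
      Cardinal.mk {x : ℕ → Bool | IsMaxPath ω x} = Cardinal.aleph0 := by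
  have hcontinuum : Cardinal.mk (ℕ → Bool) = Cardinal.continuum := by simp
  refine ⟨order, le_antisymm (hcontinuum ▸ Cardinal.mk_set_le _) ?_, ?_⟩
  · rw [← hcontinuum]
    exact Cardinal.mk_le_of_injective (f := fun y => ⟨minPath y, minPath_isMinPath y⟩)
      fun y y' h => minPath_injective (congrArg Subtype.val h)
  · have := (countable_setOf_isMaxPath isMonotoneOnLevels_order).to_subtype
    have := (Set.infinite_of_injective_forall_mem (s := {x | IsMaxPath order x})
      maxPath_injective maxPath_isMaxPath).to_subtype
    exact Cardinal.mk_eq_aleph0 _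
end

section
/- For every λ > 1 there exists a σ-finite Borel measure μ_λ on X_B such that for every finite path (v_0,…,v_n) in B one has μ_λ([v_0,…,v_n]) = (λ−1)^{v_n−1}/λ^n; in particular μ_λ is tail invariant, since the measure of a cylinder set depends only on its length n and its terminal vertex v_n. -/
open MeasureTheory

/-- An infinite path in the one-sided stationary generalized Pascal-Bratteli diagram `B`:
a sequence of vertices `v n ≥ 1` with `v (n+1) ∈ {v n, v n + 1}`. -/
def IsPathB (v : ℕ → ℕ) : Prop :=
  (∀ n, 1 ≤ v n) ∧ ∀ n, v (n + 1) = v n ∨ v (n + 1) = v n + 1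

/-- The path space `X_B`. -/
abbrev PathB : Type := {v : ℕ → ℕ // IsPathB v}

/-- `f` encodes a finite path `(f 0, …, f n)` in `B`. -/
def FinPathB (f : ℕ → ℕ) (n : ℕ) : Prop :=
  (∀ k ≤ n, 1 ≤ f k) ∧ ∀ k < n, f (k + 1) = f k ∨ f (k + 1) = f k + 1

/-- The cylinder set `[f 0, …, f n] ⊆ X_B`. -/
def CylB (f : ℕ → ℕ) (n : ℕ) : Set PathB := {w : PathB | ∀ k ≤ n, w.1 k = f k}

/-!
`μ_λ` is a superposition of random walks on `B`: start at vertex `m + 1` with weight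
`(λ - 1)^m`, then at every level independently go up with probability `(λ - 1)/λ` and stay
with probability `1/λ`. A cylinder `[v_0, …, v_n]` prescribes `v_0` and `v_n - v_0` up-steps
among `n`, so its measure is
`(λ - 1)^(v_0 - 1) · (λ - 1)^(v_n - v_0) / λ^n = (λ - 1)^(v_n - 1) / λ^n`.
-/

open Finset
open scoped ENNReal

namespace PathB

def walk (m : ℕ) (b : ℕ → Bool) : PathB :=
  ⟨fun n => m + 1 + ∑ k ∈ range n, (b k).toNat,
    ⟨fun _ => by dsimp only; omega,
      fun n => by dsimp only; rw [sum_range_succ]; cases b n <;> simp [add_assoc]⟩⟩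

@[simp]
lemma walk_zero (m : ℕ) (b : ℕ → Bool) : (walk m b).1 0 = m + 1 := by
  simp [walk]

lemma walk_succ (m : ℕ) (b : ℕ → Bool) (n : ℕ) :
    (walk m b).1 (n + 1) = (walk m b).1 n + (b n).toNat := by
  simp only [walk, sum_range_succ, add_assoc]

lemma measurable_walk (m : ℕ) : Measurable (walk m) := by
  refine Measurable.subtype_mk (measurable_pi_lambda _ fun n => ?_)
  fun_prop

lemma measurableSet_cylB (f : ℕ → ℕ) (n : ℕ) : MeasurableSet (CylB f n) := by
  simp only [CylB, Set.ofPred_forall]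
  exact .iInter fun k => .iInter fun _ =>
    measurableSet_eq_fun ((measurable_pi_apply k).comp measurable_subtype_coe) measurable_const

lemma walk_preimage_cylB_of_ne {m : ℕ} {f : ℕ → ℕ} (n : ℕ) (hm : m + 1 ≠ f 0) :
    walk m ⁻¹' CylB f n = ∅ :=
  Set.eq_empty_of_forall_notMem fun b hb => hm (by simpa using hb 0 n.zero_le)

lemma walk_preimage_cylB {f : ℕ → ℕ} {n : ℕ} (hf : FinPathB f n) :
    walk (f 0 - 1) ⁻¹' CylB f n =
      (range n : Set ℕ).pi fun k => {decide (f (k + 1) = f k + 1)} := by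
  have h0 := hf.1 0 n.zero_le
  ext b
  simp only [Set.mem_preimage, CylB, Set.mem_ofPred_eq, Set.mem_pi, coe_range, Set.mem_Iio,
    Set.mem_singleton_iff]
  constructor
  · intro h k hk
    have := walk_succ (f 0 - 1) b k
    rw [h k hk.le, h (k + 1) hk] at this
    cases hb : b k <;> simp [hb] at this ⊢ <;> omega
  · intro h k hk
    induction k with
    | zero => simp; omega
    | succ k ih =>
      rw [walk_succ, ih (by omega), h k (by omega)]
      rcases hf.2 k (by omega) with h' | h' <;> simp [h']

noncomputable def walkMeasure (P : Measure Bool) (m : ℕ) : Measure PathB :=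
  (Measure.infinitePi fun _ : ℕ => P).map (walk m)

lemma walkMeasure_cylB_of_ne (P : Measure Bool) {m : ℕ} {f : ℕ → ℕ} (n : ℕ) (hm : m + 1 ≠ f 0) :
    walkMeasure P m (CylB f n) = 0 := by
  rw [walkMeasure, Measure.map_apply (measurable_walk m) (measurableSet_cylB f n),
    walk_preimage_cylB_of_ne n hm, measure_empty]

lemma walkMeasure_cylB (P : Measure Bool) [IsProbabilityMeasure P] {f : ℕ → ℕ} {n : ℕ}
    (hf : FinPathB f n) :
    walkMeasure P (f 0 - 1) (CylB f n) = ∏ k ∈ range n, P {decide (f (k + 1) = f k + 1)} := by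
  rw [walkMeasure, Measure.map_apply (measurable_walk _) (measurableSet_cylB f n),
    walk_preimage_cylB hf]
  exact Measure.infinitePi_pi _ fun _ _ => measurableSet_singleton _

end PathB

lemma FinPathB.of_succ {f : ℕ → ℕ} {n : ℕ} (hf : FinPathB f (n + 1)) : FinPathB f n :=
  ⟨fun k hk => hf.1 k (by omega), fun k hk => hf.2 k (by omega)⟩

lemma FinPathB.sum_up_add {f : ℕ → ℕ} {n : ℕ} (hf : FinPathB f n) :
    ∑ k ∈ range n, (decide (f (k + 1) = f k + 1)).toNat + f 0 = f n := by
  induction n with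
  | zero => simp
  | succ n ih =>
    rw [sum_range_succ, add_right_comm, ih hf.of_succ]
    rcases hf.2 n n.lt_succ_self with h | h <;> simp [h]

lemma FinPathB.pow_mul_prod_div {f : ℕ → ℕ} {n : ℕ} (hf : FinPathB f n) (a l : ℝ) :
    a ^ (f 0 - 1) * ∏ k ∈ range n, a ^ (decide (f (k + 1) = f k + 1)).toNat / l =
      a ^ (f n - 1) / l ^ n := by
  have h0 := hf.1 0 n.zero_le
  rw [prod_div_distrib, prod_const, card_range, prod_pow_eq_pow_sum, mul_div_assoc', ← pow_add,
    ← hf.sum_up_add]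
  congr 2
  omega

noncomputable def stepMeasure (l : ℝ) : Measure Bool :=
  ENNReal.ofReal ((l - 1) / l) • Measure.dirac true + ENNReal.ofReal l⁻¹ • Measure.dirac false

lemma stepMeasure_singleton (l : ℝ) (b : Bool) :
    stepMeasure l {b} = ENNReal.ofReal ((l - 1) ^ b.toNat / l) := by
  cases b <;> simp [stepMeasure]

lemma isProbabilityMeasure_stepMeasure {l : ℝ} (hl : 1 ≤ l) :
    IsProbabilityMeasure (stepMeasure l) := by
  have hl0 : 0 < l := by linarith
  constructor
  simp only [stepMeasure, Measure.coe_add, Measure.coe_smul, Pi.add_apply, Pi.smul_apply,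
    measure_univ, smul_eq_mul, mul_one]
  rw [← ENNReal.ofReal_add (div_nonneg (by linarith) hl0.le) (by positivity), ← ENNReal.ofReal_one]
  congr 1
  field_simp
  ring

noncomputable def muLambda (l : ℝ) : Measure PathB :=
  Measure.sum fun m => ENNReal.ofReal ((l - 1) ^ m) • PathB.walkMeasure (stepMeasure l) m

lemma muLambda_cylB {l : ℝ} (hl : 1 ≤ l) {f : ℕ → ℕ} {n : ℕ} (hf : FinPathB f n) :
    muLambda l (CylB f n) = ENNReal.ofReal ((l - 1) ^ (f n - 1) / l ^ n) := by
  have := isProbabilityMeasure_stepMeasure hl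
  have h0 := hf.1 0 n.zero_le
  rw [muLambda, Measure.sum_apply_of_countable, tsum_eq_single (f 0 - 1) fun m hm => by
    rw [Measure.smul_apply, PathB.walkMeasure_cylB_of_ne _ n (by omega), smul_zero]]
  rw [Measure.smul_apply, smul_eq_mul, PathB.walkMeasure_cylB _ hf]
  simp_rw [stepMeasure_singleton]
  rw [← ENNReal.ofReal_prod_of_nonneg fun k _ => by positivity,
    ← ENNReal.ofReal_mul (by positivity), hf.pow_mul_prod_div]

lemma sigmaFinite_of_cylB_zero_lt_top {μ : Measure PathB}
    (h : ∀ j, μ (CylB (fun _ => j + 1) 0) < ∞) : SigmaFinite μ where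
  out' := ⟨{
    set := fun j => CylB (fun _ => j + 1) 0
    set_mem := fun _ => trivial
    finite := h
    spanning := Set.eq_univ_of_forall fun w => Set.mem_iUnion.2
      ⟨w.1 0 - 1, fun k hk => by
        have := w.2.1 0
        obtain rfl := Nat.le_zero.1 hk
        dsimp only
        omega⟩ }⟩

/-- for every `λ > 1` there exists a σ-finite Borel measure `μ_λ` on `X_B` with
`μ_λ([v_0,…,v_n]) = (λ−1)^{v_n−1}/λ^n` for every finite path; in particular `μ_λ` is
tail invariant. -/
theorem exists_measure_mu_lambda (l : ℝ) (hl : 1 < l) :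
    ∃ μ : Measure PathB, SigmaFinite μ ∧
      (∀ (n : ℕ) (f : ℕ → ℕ), FinPathB f n →
        μ (CylB f n) = ENNReal.ofReal ((l - 1) ^ (f n - 1) / l ^ n)) ∧
      (∀ (n : ℕ) (f g : ℕ → ℕ), FinPathB f n → FinPathB g n → f n = g n →
        μ (CylB f n) = μ (CylB g n)) := by
  have hcyl : ∀ (n : ℕ) (f : ℕ → ℕ), FinPathB f n →
      muLambda l (CylB f n) = ENNReal.ofReal ((l - 1) ^ (f n - 1) / l ^ n) :=
    fun _ _ hf => muLambda_cylB hl.le hf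
  refine ⟨muLambda l, sigmaFinite_of_cylB_zero_lt_top fun j => ?_, hcyl,
    fun n f g hf hg hfg => by rw [hcyl n f hf, hcyl n g hg, hfg]⟩
  rw [hcyl 0 _ ⟨fun _ _ => j.succ_pos, fun _ h => absurd h (Nat.not_lt_zero _)⟩]
  exact ENNReal.ofReal_lt_top
end

section
/- There exists an order ω on the one-sided stationary generalized Pascal-Bratteli diagram B such that both the set of ω-minimal infinite paths and the set of ω-maximal infinite paths in X_B have the cardinality of the continuum (2^ℵ₀). -/
/-- The path `v` is minimal for the order `ω` (first argument of `ω` is the vertex,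
second is the level): for every `n`, either `v (n+1) = 1` (unique incoming edge), or the
step type `v (n+1) - v n` equals the minimal step type `ω (v (n+1), n+1)`. -/
def MinPathB (ω : ℕ × ℕ → Bool) (v : ℕ → ℕ) : Prop :=
  ∀ n : ℕ, v (n + 1) = 1 ∨ v (n + 1) - v n = (if ω (v (n + 1), n + 1) then 1 else 0)

/-- The path `v` is maximal for the order `ω`. -/
def MaxPathB (ω : ℕ × ℕ → Bool) (v : ℕ → ℕ) : Prop :=
  ∀ n : ℕ, v (n + 1) = 1 ∨ v (n + 1) - v n = (if ω (v (n + 1), n + 1) then 0 else 1)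

open Finset Cardinal

section Cuts

variable {α : Type*} [LinearOrder α] (e : ℕ → α)

def countBelow (x : α) (n : ℕ) : ℕ := #{i ∈ range n | e i < x}

def rankAt (m : ℕ) : ℕ := #{i ∈ range (m + 1) | e i ≤ e m}

lemma countBelow_succ (x : α) (m : ℕ) :
    countBelow e x (m + 1) = countBelow e x m + if e m < x then 1 else 0 := by
  simp only [countBelow, card_filter, sum_range_succ]

lemma countBelow_le (x : α) (n : ℕ) : countBelow e x n ≤ n :=
  (card_filter_le _ _).trans_eq (card_range n)

variable {e}

lemma rankAt_le_countBelow_iff (x : α) (m : ℕ) :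
    rankAt e m ≤ countBelow e x (m + 1) ↔ e m < x := by
  constructor
  · intro h
    by_contra! hx
    have hsub : {i ∈ range (m + 1) | e i < x} ⊂ {i ∈ range (m + 1) | e i ≤ e m} := by
      refine ssubset_iff_of_subset (monotone_filter_right _ fun _ _ hi => hi.le.trans hx) |>.2 ?_
      exact ⟨m, by simp, by simpa using hx⟩
    exact (card_lt_card hsub).not_ge h
  · intro hx
    exact card_le_card (monotone_filter_right _ fun _ _ hi => hi.trans_lt hx)

lemma countBelow_strictMono (he : ∀ x y, x < y → ∃ i, x ≤ e i ∧ e i < y) :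
    StrictMono (countBelow e) := by
  intro x y hxy
  refine lt_of_le_of_ne (fun n => card_le_card (monotone_filter_right _ fun _ _ hi => hi.trans hxy))
    fun h => ?_
  obtain ⟨i, hxi, hiy⟩ := he x y hxy
  have hx := countBelow_succ e x i
  have hy := countBelow_succ e y i
  rw [if_neg hxi.not_gt, congrFun h, congrFun h] at hx
  rw [if_pos hiy] at hy
  omega

end Cuts

section Order

variable {α : Type*} [LinearOrder α] {e : ℕ → α}

/-- At the odd level `2m + 1` the point `e m` is inserted: among the vertices `1, …, m + 2`,
which carry the minimal paths, the vertex `rankAt e m` of level `2m` becomes the minimal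
predecessor of both `rankAt e m` and `rankAt e m + 1`; the vertices from `m + 3` on carry the
maximal paths and are treated in the same way. At even levels every minimal edge is vertical,
so that the maximal paths climb away from the minimal ones. -/
def cutOrder (e : ℕ → α) : ℕ × ℕ → Bool
  | (j, k) =>
    if k % 2 = 0 then false
    else if j ≤ k / 2 + 2 then decide (rankAt e (k / 2) ≤ j - 1)
    else !decide (rankAt e (k / 2) ≤ j - (k / 2 + 3))

lemma cutOrder_even (j m : ℕ) : cutOrder e (j, 2 * (m + 1)) = false := by
  simp [cutOrder]

lemma cutOrder_odd_of_le {j m : ℕ} (hj : j ≤ m + 2) :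
    cutOrder e (j, 2 * m + 1) = decide (rankAt e m ≤ j - 1) := by
  simp [cutOrder, Nat.mul_add_div, hj]

lemma cutOrder_odd_add (m c : ℕ) :
    cutOrder e (m + 3 + c, 2 * m + 1) = !decide (rankAt e m ≤ c) := by
  simp [cutOrder, Nat.mul_add_div, show ¬ m + 3 + c ≤ m + 2 by omega]

end Order

section Paths

variable {α : Type*} [LinearOrder α] (e : ℕ → α)

def minCutPath (x : α) (n : ℕ) : ℕ := 1 + countBelow e x ((n + 1) / 2)

def maxCutPath (x : α) (n : ℕ) : ℕ := n / 2 + 3 + countBelow e x ((n + 1) / 2)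

variable {e}

lemma minCutPath_two_mul (x : α) (m : ℕ) : minCutPath e x (2 * m) = 1 + countBelow e x m := by
  simp only [minCutPath]; congr 2; omega

lemma minCutPath_two_mul_add_one (x : α) (m : ℕ) :
    minCutPath e x (2 * m + 1) = 1 + countBelow e x (m + 1) := by
  simp only [minCutPath]; congr 2; omega

lemma maxCutPath_two_mul (x : α) (m : ℕ) :
    maxCutPath e x (2 * m) = m + 3 + countBelow e x m := by
  simp only [maxCutPath]; congr 2 <;> omega

lemma maxCutPath_two_mul_add_one (x : α) (m : ℕ) :
    maxCutPath e x (2 * m + 1) = m + 3 + countBelow e x (m + 1) := by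
  simp only [maxCutPath]; congr 2 <;> omega

lemma isPathB_minCutPath (x : α) : IsPathB (minCutPath e x) := by
  refine ⟨fun n => by simp [minCutPath], fun n => ?_⟩
  obtain ⟨m, rfl | rfl⟩ := Nat.even_or_odd' n
  · rw [minCutPath_two_mul_add_one, minCutPath_two_mul, countBelow_succ]
    split_ifs <;> omega
  · rw [show 2 * m + 1 + 1 = 2 * (m + 1) by ring, minCutPath_two_mul,
      minCutPath_two_mul_add_one]
    exact Or.inl rfl

lemma isPathB_maxCutPath (x : α) : IsPathB (maxCutPath e x) := by
  refine ⟨fun n => by simp [maxCutPath]; omega, fun n => ?_⟩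
  obtain ⟨m, rfl | rfl⟩ := Nat.even_or_odd' n
  · rw [maxCutPath_two_mul_add_one, maxCutPath_two_mul, countBelow_succ]
    split_ifs <;> omega
  · rw [show 2 * m + 1 + 1 = 2 * (m + 1) by ring, maxCutPath_two_mul,
      maxCutPath_two_mul_add_one]
    omega

lemma minPathB_minCutPath (x : α) : MinPathB (cutOrder e) (minCutPath e x) := by
  intro n
  right
  obtain ⟨m, rfl | rfl⟩ := Nat.even_or_odd' n
  · have hle : 1 + countBelow e x (m + 1) ≤ m + 2 := by have := countBelow_le e x (m + 1); omega
    rw [minCutPath_two_mul_add_one, minCutPath_two_mul, cutOrder_odd_of_le hle,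
      Nat.add_sub_cancel_left]
    simp only [decide_eq_true_eq, rankAt_le_countBelow_iff]
    rw [countBelow_succ]
    split_ifs <;> omega
  · rw [show 2 * m + 1 + 1 = 2 * (m + 1) by ring, minCutPath_two_mul,
      minCutPath_two_mul_add_one, cutOrder_even]
    simp

lemma maxPathB_maxCutPath (x : α) : MaxPathB (cutOrder e) (maxCutPath e x) := by
  intro n
  right
  obtain ⟨m, rfl | rfl⟩ := Nat.even_or_odd' n
  · rw [maxCutPath_two_mul_add_one, maxCutPath_two_mul, cutOrder_odd_add]
    simp only [rankAt_le_countBelow_iff, Bool.not_eq_true', decide_eq_false_iff_not]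
    rw [countBelow_succ]
    split_ifs <;> omega
  · rw [show 2 * m + 1 + 1 = 2 * (m + 1) by ring, maxCutPath_two_mul,
      maxCutPath_two_mul_add_one, cutOrder_even]
    simp; omega

lemma minCutPath_injective (he : ∀ x y, x < y → ∃ i, x ≤ e i ∧ e i < y) :
    Function.Injective (minCutPath e) := fun x y h =>
  (countBelow_strictMono he).injective <| funext fun m => by
    simpa [minCutPath_two_mul] using congrFun h (2 * m)

lemma maxCutPath_injective (he : ∀ x y, x < y → ∃ i, x ≤ e i ∧ e i < y) :
    Function.Injective (maxCutPath e) := fun x y h =>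
  (countBelow_strictMono he).injective <| funext fun m => by
    simpa [maxCutPath_two_mul] using congrFun h (2 * m)

end Paths

lemma exists_ratCast_ofNat_mem_Ico {x y : ℝ} (h : x < y) :
    ∃ i, x ≤ ((Denumerable.ofNat ℚ i : ℚ) : ℝ) ∧ ((Denumerable.ofNat ℚ i : ℚ) : ℝ) < y := by
  obtain ⟨q, hxq, hqy⟩ := exists_rat_btwn h
  obtain ⟨i, rfl⟩ := (Denumerable.eqv ℚ).symm.surjective q
  exact ⟨i, hxq.le, hqy⟩

lemma mk_eq_continuum_of_injective {S : Set (ℕ → ℕ)} {f : ℝ → ℕ → ℕ}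
    (hf : Function.Injective f) (hS : ∀ x, f x ∈ S) : #S = 𝔠 := by
  apply le_antisymm
  · exact (mk_set_le S).trans_eq (by simp)
  · rw [← mk_real]
    exact mk_le_of_injective (f := fun x => (⟨f x, hS x⟩ : S)) fun x y h =>
      hf (congrArg Subtype.val h)

/-- there is an order on `B` with continuum many minimal infinite paths and
continuum many maximal infinite paths. -/
theorem one_sided_order_continuum_min_max :
    ∃ ω : ℕ × ℕ → Bool,
      Cardinal.mk {v : ℕ → ℕ | IsPathB v ∧ MinPathB ω v} = Cardinal.continuum ∧
      Cardinal.mk {v : ℕ → ℕ | IsPathB v ∧ MaxPathB ω v} = Cardinal.continuum := by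
  set e : ℕ → ℝ := fun i => ((Denumerable.ofNat ℚ i : ℚ) : ℝ)
  have he : ∀ x y, x < y → ∃ i, x ≤ e i ∧ e i < y := fun _ _ => exists_ratCast_ofNat_mem_Ico
  exact ⟨cutOrder e,
    mk_eq_continuum_of_injective (minCutPath_injective he)
      fun x => ⟨isPathB_minCutPath x, minPathB_minCutPath x⟩,
    mk_eq_continuum_of_injective (maxCutPath_injective he)
      fun x => ⟨isPathB_maxCutPath x, maxPathB_maxCutPath x⟩⟩
end

section
/- There exists an order ω on the one-sided stationary generalized Pascal-Bratteli diagram B such that the set of ω-minimal infinite paths in X_B has the cardinality of the continuum (2^ℵ₀) while the set of ω-maximal infinite paths is countably infinite. -/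
lemma IsPathB.monotone {v : ℕ → ℕ} (hv : IsPathB v) : Monotone v :=
  monotone_nat_of_le_succ fun n => by rcases hv.2 n with h | h <;> omega

lemma IsPathB.exists_rise_to {v : ℕ → ℕ} (hv : IsPathB v) {c N : ℕ} (h0 : v 0 < c)
    (hN : c ≤ v N) : ∃ n, v (n + 1) = v n + 1 ∧ v (n + 1) = c := by
  induction N with
  | zero => omega
  | succ N ih =>
    by_cases h : c ≤ v N
    · exact ih h
    · rcases hv.2 N with h' | h' <;> exact ⟨N, by omega, by omega⟩

lemma exists_forall_ge_eq_of_monotone {v : ℕ → ℕ} {B : ℕ} (hv : Monotone v)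
    (hB : ∀ n, v n ≤ B) : ∃ N, ∀ n, N ≤ n → v n = v N := by
  have hbdd : BddAbove (Set.range v) := ⟨B, by rintro _ ⟨n, rfl⟩; exact hB n⟩
  obtain ⟨N, hN⟩ := Nat.sSup_mem (Set.range_nonempty v) hbdd
  exact ⟨N, fun n hn => le_antisymm (hN ▸ le_csSup hbdd ⟨n, rfl⟩) (hv hn)⟩

lemma MaxPathB.le_of_eq_true {ω : ℕ × ℕ → Bool} {v : ℕ → ℕ} (hv : MaxPathB ω v)
    {n : ℕ} (h1 : v (n + 1) ≠ 1) (hω : ω (v (n + 1), n + 1) = true) : v (n + 1) ≤ v n := by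
  have h := (hv n).resolve_left h1
  simp only [hω, if_true] at h
  omega

lemma MaxPathB.ne_of_eq_false {ω : ℕ × ℕ → Bool} {v : ℕ → ℕ} (hv : MaxPathB ω v)
    {n : ℕ} (h1 : v (n + 1) ≠ 1) (hω : ω (v (n + 1), n + 1) = false) : v (n + 1) ≠ v n := by
  have h := (hv n).resolve_left h1
  simp only [hω, Bool.false_eq_true, if_false] at h
  omega

def MinEdgeAt (ω : ℕ × ℕ → Bool) (v : ℕ → ℕ) (n : ℕ) : Prop :=
  (v (n + 1) = v n ∧ (v (n + 1) = 1 ∨ ω (v (n + 1), n + 1) = false)) ∨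
    (v (n + 1) = v n + 1 ∧ ω (v (n + 1), n + 1) = true)

lemma isPathB_and_minPathB {ω : ℕ × ℕ → Bool} {v : ℕ → ℕ} (h0 : 1 ≤ v 0)
    (hstep : ∀ n, MinEdgeAt ω v n) : IsPathB v ∧ MinPathB ω v := by
  refine ⟨⟨fun n => ?_, fun n => ?_⟩, fun n => ?_⟩
  · induction n with
    | zero => exact h0
    | succ n ih => rcases hstep n with ⟨h, -⟩ | ⟨h, -⟩ <;> omega
  · rcases hstep n with ⟨h, -⟩ | ⟨h, -⟩ <;> omega
  · rcases hstep n with ⟨heq, h | h⟩ | ⟨h, hω⟩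
    · exact Or.inl h
    · exact Or.inr (by rw [h, heq]; simp)
    · exact Or.inr (by rw [hω, h]; simp)

lemma exists_two_pow_le_and_lt_of_four_le {k : ℕ} (hk : 4 ≤ k) :
    ∃ q, 2 ^ (q + 2) ≤ k ∧ k < 2 ^ (q + 3) := by
  have hlog : 2 ≤ Nat.log 2 k := (Nat.le_log_iff_pow_le one_lt_two (by omega)).2 hk
  refine ⟨Nat.log 2 k - 2, ?_, ?_⟩
  · rw [Nat.sub_add_cancel hlog]
    exact Nat.pow_log_le_self 2 (by omega)
  · rw [show Nat.log 2 k - 2 + 3 = Nat.log 2 k + 1 by omega]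
    exact Nat.lt_pow_succ_log_self one_lt_two k

namespace PascalBratteli

def sweep (k : ℕ) : ℕ := 2 ^ (Nat.log 2 k + 1) + 1 - k

lemma sweep_eq {q k : ℕ} (h1 : 2 ^ q ≤ k) (h2 : k < 2 ^ (q + 1)) :
    sweep k = 2 ^ (q + 1) + 1 - k := by
  rw [sweep, Nat.log_eq_of_pow_le_of_lt_pow h1 h2]

lemma sweep_two_pow (m : ℕ) : sweep (2 ^ m) = 2 ^ m + 1 := by
  rw [sweep_eq le_rfl (Nat.pow_lt_pow_succ one_lt_two), pow_succ]
  omega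

def IsSafe (j : ℕ) : Prop := ∃ m, j = 5 * 2 ^ m

lemma IsSafe.ne_one {j : ℕ} (hj : IsSafe j) : j ≠ 1 := by
  obtain ⟨m, rfl⟩ := hj
  have := Nat.one_le_two_pow (n := m)
  omega

lemma not_isSafe_of_lt_of_le {q j : ℕ} (h1 : 3 * 2 ^ q < j) (h2 : j ≤ 4 * 2 ^ q) :
    ¬IsSafe j := by
  rintro ⟨m, rfl⟩
  rcases lt_or_ge m q with h | h
  · have := Nat.pow_le_pow_right two_pos h
    rw [pow_succ] at this
    omega
  · have := Nat.pow_le_pow_right two_pos h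
    omega

open Classical in
noncomputable def sweepOrder (p : ℕ × ℕ) : Bool := decide (IsSafe p.1 ∨ sweep p.2 ≤ p.1)

lemma sweepOrder_eq_true_iff {j k : ℕ} :
    sweepOrder (j, k) = true ↔ IsSafe j ∨ sweep k ≤ j := by
  simp [sweepOrder]

lemma sweepOrder_eq_false_iff {j k : ℕ} :
    sweepOrder (j, k) = false ↔ ¬IsSafe j ∧ j < sweep k := by
  simp [sweepOrder]

lemma minEdgeAt_sweepOrder_of_stay {v : ℕ → ℕ} {n : ℕ} (h : v (n + 1) = v n)
    (hs : ¬IsSafe (v (n + 1))) (hlt : v (n + 1) < sweep (n + 1)) :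
    MinEdgeAt sweepOrder v n :=
  Or.inl ⟨h, Or.inr (sweepOrder_eq_false_iff.2 ⟨hs, hlt⟩)⟩

lemma minEdgeAt_sweepOrder_of_rise {v : ℕ → ℕ} {n : ℕ} (h : v (n + 1) = v n + 1)
    (hle : sweep (n + 1) ≤ v (n + 1)) : MinEdgeAt sweepOrder v n :=
  Or.inr ⟨h, sweepOrder_eq_true_iff.2 (Or.inr hle)⟩

section MaximalPaths

variable {v : ℕ → ℕ}

lemma isPathB_and_maxPathB_const {c : ℕ} (hc : IsSafe c) :
    IsPathB (fun _ => c) ∧ MaxPathB sweepOrder (fun _ => c) := by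
  refine ⟨⟨fun _ => ?_, fun _ => Or.inl rfl⟩, fun _ => Or.inr ?_⟩
  · obtain ⟨m, rfl⟩ := hc
    show 1 ≤ 5 * 2 ^ m
    have := Nat.one_le_two_pow (n := m)
    omega
  · simp [sweepOrder_eq_true_iff.2 (Or.inl hc)]

lemma _root_.MaxPathB.le_of_isSafe (hm : MaxPathB sweepOrder v) {n : ℕ}
    (hs : IsSafe (v (n + 1))) : v (n + 1) ≤ v n :=
  hm.le_of_eq_true hs.ne_one (sweepOrder_eq_true_iff.2 (Or.inl hs))

lemma lt_five_mul_two_pow_of_maxPathB (hp : IsPathB v) (hm : MaxPathB sweepOrder v) (n : ℕ) :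
    v n < 5 * 2 ^ v 0 := by
  by_contra! hn
  have h0 : v 0 < 5 * 2 ^ v 0 := by
    have := Nat.lt_two_pow_self (n := v 0)
    omega
  obtain ⟨k, hrise, hk⟩ := hp.exists_rise_to h0 hn
  have := hm.le_of_isSafe (n := k) ⟨v 0, hk⟩
  omega

lemma eq_one_or_isSafe_of_maxPathB (hm : MaxPathB sweepOrder v) {N j : ℕ}
    (hN : ∀ n, N ≤ n → v n = v N) (hj : N < 2 ^ j) (hvj : v N < 2 ^ j) :
    v N = 1 ∨ IsSafe (v N) := by
  by_contra! h
  have hk : 2 ^ j - 1 + 1 = 2 ^ j := Nat.sub_add_cancel Nat.one_le_two_pow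
  have hstay : v (2 ^ j - 1 + 1) = v N := hN _ (by omega)
  have hω : sweepOrder (v (2 ^ j - 1 + 1), 2 ^ j - 1 + 1) = false := by
    rw [sweepOrder_eq_false_iff, hstay, hk, sweep_two_pow]
    exact ⟨h.2, by omega⟩
  exact hm.ne_of_eq_false (hstay ▸ h.1) hω (by rw [hstay, hN (2 ^ j - 1) (by omega)])

lemma eq_of_maxPathB (hp : IsPathB v) (hm : MaxPathB sweepOrder v) (n : ℕ) : v n = v 0 := by
  have hbound := lt_five_mul_two_pow_of_maxPathB hp hm
  obtain ⟨N, hN⟩ := exists_forall_ge_eq_of_monotone hp.monotone fun n => (hbound n).le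
  have hL : v N = 1 ∨ IsSafe (v N) :=
    eq_one_or_isSafe_of_maxPathB hm hN (j := N + 5 * 2 ^ v 0)
      (by have := Nat.lt_two_pow_self (n := N + 5 * 2 ^ v 0); omega)
      (by have := Nat.lt_two_pow_self (n := N + 5 * 2 ^ v 0); have := hbound N; omega)
  have hN0 : v N = v 0 := by
    by_contra hne
    have hlt : v 0 < v N := lt_of_le_of_ne (hp.monotone (Nat.zero_le N)) (Ne.symm hne)
    obtain ⟨k, hrise, hk⟩ := hp.exists_rise_to hlt le_rfl
    rcases hL with h1 | hs
    · have := hp.1 k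
      omega
    · have := hm.le_of_isSafe (n := k) (hk ▸ hs)
      omega
  have := hp.monotone (le_max_left n N)
  have := hN _ (le_max_right n N)
  have := hp.monotone (Nat.zero_le n)
  omega

lemma card_maxPaths :
    Cardinal.mk {v : ℕ → ℕ | IsPathB v ∧ MaxPathB sweepOrder v} = Cardinal.aleph0 := by
  refine le_antisymm (Cardinal.mk_le_aleph0_iff.2 ?_) ?_
  · refine ((Set.countable_range fun c : ℕ => fun _ : ℕ => c).mono ?_).to_subtype
    rintro v ⟨hp, hm⟩
    exact ⟨v 0, funext fun n => (eq_of_maxPathB hp hm n).symm⟩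
  · have hinj : Function.Injective fun m : ℕ =>
        (⟨fun _ => 5 * 2 ^ m, isPathB_and_maxPathB_const ⟨m, rfl⟩⟩ :
          {v : ℕ → ℕ | IsPathB v ∧ MaxPathB sweepOrder v}) := by
      intro a b h
      have := congrFun (congrArg Subtype.val h) 0
      exact Nat.pow_right_injective le_rfl (by simpa using this)
    simpa only [Cardinal.mk_nat] using Cardinal.mk_le_of_injective hinj

end MaximalPaths

section MinimalPaths

variable (s : ℕ → Bool)

def choiceBit : ℕ → ℕ
  | 0 | 1 => 1
  | q + 2 => (s q).toNat

def anchor : ℕ → ℕ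
  | 0 => 1
  | q + 1 => 2 * anchor q + choiceBit s q - 1

/-- `anchor s q` is the height at which the path waits in the block of levels
`[2 ^ (q + 2) - 1, 2 ^ (q + 3) - 1)`; it starts to climb when the sweep reaches it, one level
later if `choiceBit s q = 0`. -/
def sweepPath (t : ℕ) : ℕ :=
  let q := Nat.log 2 (t + 1) - 2
  anchor s q + (t + choiceBit s q + anchor s q - 2 ^ (q + 3))

lemma choiceBit_le_one (q : ℕ) : choiceBit s q ≤ 1 := by
  rcases q with _ | _ | q
  · exact le_rfl
  · exact le_rfl
  · exact Bool.toNat_le _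

lemma anchor_le (q : ℕ) : anchor s q ≤ 2 ^ q := by
  induction q with
  | zero => exact le_rfl
  | succ q ih =>
    have := choiceBit_le_one s q
    rw [anchor, pow_succ]
    omega

lemma three_mul_two_pow_lt_anchor (q : ℕ) : 3 * 2 ^ q < anchor s (q + 2) := by
  induction q with
  | zero => simp [anchor, choiceBit]
  | succ q ih =>
    show 3 * 2 ^ (q + 1) < 2 * anchor s (q + 2) + choiceBit s (q + 2) - 1
    rw [pow_succ]
    omega

lemma two_le_anchor_succ (q : ℕ) : 2 ≤ anchor s (q + 1) := by
  rcases q with _ | q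
  · exact le_rfl
  · show 2 ≤ anchor s (q + 2)
    have := three_mul_two_pow_lt_anchor s q
    have := Nat.one_le_two_pow (n := q)
    omega

lemma not_isSafe_anchor (q : ℕ) : ¬IsSafe (anchor s q) := by
  rcases q with _ | _ | q
  · exact fun h => h.ne_one rfl
  · rintro ⟨m, hm⟩
    have := Nat.one_le_two_pow (n := m)
    simp only [anchor, choiceBit] at hm
    omega
  · show ¬IsSafe (anchor s (q + 2))
    have := anchor_le s (q + 2)
    rw [pow_succ, pow_succ] at this
    exact not_isSafe_of_lt_of_le (three_mul_two_pow_lt_anchor s q) (by omega)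

lemma sweepPath_eq {q t : ℕ} (h1 : 2 ^ (q + 2) ≤ t + 1 ∨ q = 0) (h2 : t + 1 < 2 ^ (q + 3)) :
    sweepPath s t = anchor s q + (t + choiceBit s q + anchor s q - 2 ^ (q + 3)) := by
  have hlog : Nat.log 2 (t + 1) - 2 = q := by
    rcases h1 with h1 | rfl
    · rw [Nat.log_eq_of_pow_le_of_lt_pow h1 h2]
      rfl
    · have := Nat.log_lt_of_lt_pow (by omega) h2
      omega
  simp only [sweepPath, hlog]

lemma sweepPath_two_pow_sub_one (q : ℕ) : sweepPath s (2 ^ (q + 2) - 1) = anchor s q := by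
  have hpos := Nat.one_le_two_pow (n := q + 2)
  have h := anchor_le s q
  have := choiceBit_le_one s q
  have h4 : 2 ^ (q + 2) = 4 * 2 ^ q := by ring
  have h8 : 2 ^ (q + 3) = 8 * 2 ^ q := by ring
  rw [sweepPath_eq s (q := q) (Or.inl (by omega)) (by omega)]
  omega

lemma sweepPath_of_le_three {t : ℕ} (ht : t ≤ 3) : sweepPath s t = 1 := by
  rw [sweepPath_eq s (q := 0) (Or.inr rfl) (by omega)]
  simp only [anchor, choiceBit]
  omega

lemma minEdgeAt_sweepPath_of_lt {q n : ℕ} (hlo : 2 ^ (q + 2) ≤ n + 1)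
    (hhi : n + 2 < 2 ^ (q + 3)) : MinEdgeAt sweepOrder (sweepPath s) n := by
  have hhi' : n + 1 < 2 ^ (q + 3) := by omega
  have hsweep : sweep (n + 1) = 2 ^ (q + 3) + 1 - (n + 1) := sweep_eq hlo hhi'
  have hv := sweepPath_eq s (Or.inl hlo) hhi'
  have hv' := sweepPath_eq s (t := n + 1) (Or.inl (by omega)) hhi
  have hc := choiceBit_le_one s q
  by_cases hwait : n + 1 + choiceBit s q + anchor s q ≤ 2 ^ (q + 3)
  · have hstay : sweepPath s (n + 1) = anchor s q := by omega
    exact minEdgeAt_sweepOrder_of_stay (by omega) (hstay ▸ not_isSafe_anchor s q) (by omega)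
  · exact minEdgeAt_sweepOrder_of_rise (by omega) (by omega)

lemma minEdgeAt_sweepPath_of_eq {q n : ℕ} (hn : n + 2 = 2 ^ (q + 3)) :
    MinEdgeAt sweepOrder (sweepPath s) n := by
  have hpow : 2 ^ (q + 3) = 2 * 2 ^ (q + 2) := by ring
  have hlo : 2 ^ (q + 2) ≤ n + 1 := by omega
  have hhi : n + 1 < 2 ^ (q + 3) := by omega
  have hsweep : sweep (n + 1) = 2 ^ (q + 3) + 1 - (n + 1) := sweep_eq hlo hhi
  have hv := sweepPath_eq s (Or.inl hlo) hhi
  have hnext : sweepPath s (n + 1) = 2 * anchor s q + choiceBit s q - 1 := by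
    rw [show n + 1 = 2 ^ (q + 3) - 1 by omega]
    exact sweepPath_two_pow_sub_one s (q + 1)
  have h2 : 2 ≤ 2 * anchor s q + choiceBit s q - 1 := two_le_anchor_succ s q
  exact minEdgeAt_sweepOrder_of_rise (by omega) (by omega)

lemma minEdgeAt_sweepPath (n : ℕ) : MinEdgeAt sweepOrder (sweepPath s) n := by
  rcases lt_or_ge (n + 1) 4 with hsmall | hlarge
  · rw [MinEdgeAt, sweepPath_of_le_three s (by omega : n + 1 ≤ 3),
      sweepPath_of_le_three s (by omega : n ≤ 3)]
    exact Or.inl ⟨rfl, Or.inl rfl⟩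
  obtain ⟨q, hlo, hhi⟩ := exists_two_pow_le_and_lt_of_four_le hlarge
  rcases lt_or_ge (n + 2) (2 ^ (q + 3)) with hwithin | hboundary
  · exact minEdgeAt_sweepPath_of_lt s hlo hwithin
  · exact minEdgeAt_sweepPath_of_eq s (q := q) (by omega)

lemma isPathB_and_minPathB_sweepPath :
    IsPathB (sweepPath s) ∧ MinPathB sweepOrder (sweepPath s) :=
  isPathB_and_minPathB (sweepPath_of_le_three s (Nat.zero_le 3)).ge (minEdgeAt_sweepPath s)

lemma sweepPath_injective : Function.Injective sweepPath := by
  intro s s' h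
  have hA : ∀ q, anchor s q = anchor s' q := fun q => by
    rw [← sweepPath_two_pow_sub_one s, ← sweepPath_two_pow_sub_one s', h]
  funext q
  have hbit : (s q).toNat = (s' q).toNat := by
    have e : anchor s (q + 3) = 2 * anchor s (q + 2) + (s q).toNat - 1 := rfl
    have e' : anchor s' (q + 3) = 2 * anchor s' (q + 2) + (s' q).toNat - 1 := rfl
    have := hA (q + 3)
    have := hA (q + 2)
    have : 2 ≤ anchor s (q + 2) := two_le_anchor_succ s (q + 1)
    omega
  cases hs : s q <;> cases hs' : s' q <;> simp_all

lemma card_minPaths :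
    Cardinal.mk {v : ℕ → ℕ | IsPathB v ∧ MinPathB sweepOrder v} = Cardinal.continuum := by
  refine le_antisymm ((Cardinal.mk_set_le _).trans (by simp)) ?_
  have hinj : Function.Injective fun s : ℕ → Bool =>
      (⟨sweepPath s, isPathB_and_minPathB_sweepPath s⟩ :
        {v : ℕ → ℕ | IsPathB v ∧ MinPathB sweepOrder v}) :=
    fun _ _ h => sweepPath_injective (congrArg Subtype.val h)
  calc Cardinal.continuum = Cardinal.mk (ℕ → Bool) := by simp
    _ ≤ _ := Cardinal.mk_le_of_injective hinj

end MinimalPaths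

end PascalBratteli

/-- there is an order on `B` with continuum many minimal infinite paths and
countably infinitely many maximal infinite paths. -/
theorem one_sided_order_continuum_min_countable_max :
    ∃ ω : ℕ × ℕ → Bool,
      Cardinal.mk {v : ℕ → ℕ | IsPathB v ∧ MinPathB ω v} = Cardinal.continuum ∧
      Cardinal.mk {v : ℕ → ℕ | IsPathB v ∧ MaxPathB ω v} = Cardinal.aleph0 :=
  ⟨PascalBratteli.sweepOrder, PascalBratteli.card_minPaths, PascalBratteli.card_maxPaths⟩
end

section
/- There exists an order ω on the two-sided stationary generalized Pascal-Bratteli diagram B̃ such that no infinite path in X_B̃ is ω-minimal and no infinite path is ω-maximal (i.e., X_min = X_max = ∅). -/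
/-- An infinite path in the two-sided stationary generalized Pascal-Bratteli diagram `B̃`:
a sequence of vertices `v n ∈ ℤ` with `v (n+1) ∈ {v n, v n + 1}`. -/
def IsPathZ (v : ℕ → ℤ) : Prop :=
  ∀ n, v (n + 1) = v n ∨ v (n + 1) = v n + 1

/-- The path `v` is minimal for the order `ω` (first argument of `ω` is the vertex,
second is the level): for every `n`, the step type `v (n+1) - v n` equals the minimal
step type `ω (v (n+1), n+1)`. -/
def MinPathZ (ω : ℤ × ℕ → Bool) (v : ℕ → ℤ) : Prop :=
  ∀ n : ℕ, v (n + 1) - v n = (if ω (v (n + 1), n + 1) then 1 else 0)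

/-- The path `v` is maximal for the order `ω`. -/
def MaxPathZ (ω : ℤ × ℕ → Bool) (v : ℕ → ℤ) : Prop :=
  ∀ n : ℕ, v (n + 1) - v n = (if ω (v (n + 1), n + 1) then 0 else 1)

/-- If `F` grows by at most 1 per step but strictly decreases on the whole block
`[3^j, 3^(j+1))` of levels, and `F 0 < 3^j`, we get a contradiction. -/
lemma no_inf_descent (F : ℕ → ℕ) (hgrow : ∀ n, F (n + 1) ≤ F n + 1) (j : ℕ)
    (hdec : ∀ n, 3 ^ j ≤ n + 1 → n + 1 < 3 ^ (j + 1) → F (n + 1) < F n)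
    (hj : F 0 < 3 ^ j) : False := by
  have h1 : 1 ≤ 3 ^ j := Nat.one_le_pow _ _ (by norm_num)
  set m := 3 ^ j - 1 with hm
  have hgrow' : ∀ n, F n ≤ F 0 + n := by
    intro n
    induction n with
    | zero => omega
    | succ n ih => have := hgrow n; omega
  have key : ∀ t, m + t + 1 < 3 ^ (j + 1) → F (m + t) + t ≤ F m := by
    intro t
    induction t with
    | zero => simp
    | succ t ih =>
      intro ht
      have h2 : F (m + t + 1) < F (m + t) := by
        apply hdec
        · omega
        · omega
      have h3 : F (m + t) + t ≤ F m := ih (by omega)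
      have : m + (t + 1) = m + t + 1 := by omega
      rw [this]
      omega
  have hFm : F m ≤ F 0 + m := hgrow' m
  have hpow : 3 ^ (j + 1) = 3 * 3 ^ j := by ring
  have := key (F m + 1) (by omega)
  omega

/-- there is an order on `B̃` with no minimal and no maximal infinite paths. -/
theorem two_sided_order_no_min_no_max :
    ∃ ω : ℤ × ℕ → Bool,
      {v : ℕ → ℤ | IsPathZ v ∧ MinPathZ ω v} = ∅ ∧
      {v : ℕ → ℤ | IsPathZ v ∧ MaxPathZ ω v} = ∅ := by
  refine ⟨fun jk => if Even (Nat.log 3 jk.2) then decide (2 * jk.1 ≤ (jk.2 : ℤ))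
    else decide ((jk.2 : ℤ) ≤ 2 * jk.1), ?_, ?_⟩
  · rw [Set.eq_empty_iff_forall_notMem]
    rintro v ⟨hpath, hmin⟩
    set F : ℕ → ℕ := fun n => (2 * v n - n).natAbs with hF
    have hgrow : ∀ n, F (n + 1) ≤ F n + 1 := by
      intro n
      have := hpath n
      simp only [hF]
      push_cast
      omega
    have hdec : ∀ n, 3 ^ (2 * (F 0 + 1)) ≤ n + 1 → n + 1 < 3 ^ (2 * (F 0 + 1) + 1) →
        F (n + 1) < F n := by
      intro n hl hu
      have hlog : Nat.log 3 (n + 1) = 2 * (F 0 + 1) :=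
        Nat.log_eq_of_pow_le_of_lt_pow hl hu
      have heven : Even (Nat.log 3 (n + 1)) := by rw [hlog]; exact even_two_mul _
      have hmn := hmin n
      have hpn := hpath n
      simp only [if_pos heven, decide_eq_true_eq] at hmn
      by_cases h : 2 * v (n + 1) ≤ ((n + 1 : ℕ) : ℤ)
      · rw [if_pos h] at hmn
        simp only [hF]
        push_cast at h ⊢
        omega
      · rw [if_neg h] at hmn
        simp only [hF]
        push_cast at h ⊢
        omega
    have hj : F 0 < 3 ^ (2 * (F 0 + 1)) := by
      have := Nat.lt_pow_self (a := 3) (n := 2 * (F 0 + 1)) (by norm_num)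
      omega
    exact no_inf_descent F hgrow _ hdec hj
  · rw [Set.eq_empty_iff_forall_notMem]
    rintro v ⟨hpath, hmax⟩
    set F : ℕ → ℕ := fun n => (2 * v n - n).natAbs with hF
    have hgrow : ∀ n, F (n + 1) ≤ F n + 1 := by
      intro n
      have := hpath n
      simp only [hF]
      push_cast
      omega
    have hdec : ∀ n, 3 ^ (2 * F 0 + 1) ≤ n + 1 → n + 1 < 3 ^ (2 * F 0 + 1 + 1) →
        F (n + 1) < F n := by
      intro n hl hu
      have hlog : Nat.log 3 (n + 1) = 2 * F 0 + 1 :=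
        Nat.log_eq_of_pow_le_of_lt_pow hl hu
      have hodd : ¬ Even (Nat.log 3 (n + 1)) := by
        rw [hlog]; simp [Nat.even_add_one, parity_simps]
      have hmn := hmax n
      have hpn := hpath n
      simp only [if_neg hodd, decide_eq_true_eq] at hmn
      by_cases h : ((n + 1 : ℕ) : ℤ) ≤ 2 * v (n + 1)
      · rw [if_pos h] at hmn
        simp only [hF]
        push_cast at h ⊢
        omega
      · rw [if_neg h] at hmn
        simp only [hF]
        push_cast at h ⊢
        omega
    have hj : F 0 < 3 ^ (2 * F 0 + 1) := by
      have := Nat.lt_pow_self (a := 3) (n := 2 * F 0 + 1) (by norm_num)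
      omega
    exact no_inf_descent F hgrow _ hdec hj
end

section
/- There exists an order ω on the two-sided stationary generalized Pascal-Bratteli diagram B̃ such that the set of ω-minimal infinite paths in X_B̃ has the cardinality of the continuum (2^ℵ₀) while the set of ω-maximal infinite paths is countably infinite. -/
/-!
Take the order `ω(c, k) = [c < 0 ∨ t_k ≤ c]`, where the threshold `t_k = 2j + 1` for
`k = 2^m + j`, `j < 2^m`, sweeps the odd numbers below `2^(m+1)` during the `m`-th phase and
then restarts. Moving forward from vertex `c ≥ 0`, a minimal path is frozen below the threshold,
forced up above it, and free exactly at `c = t - 1`. A path entering phase `m` at `r < 2^m`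
climbs at speed one while the threshold climbs at speed two, meets it at `j = r`, and leaves
the phase at `2r` or `2r + 1` at will; reading off the bits of `x : ℕ → Bool` embeds Cantor
space into the minimal paths.

A maximal path, instead, has a choice only at vertex `-1` (stay, or step up to `0`), so it is
determined by its starting vertex and the time it becomes nonnegative; the constant paths at
negative vertices show there are infinitely many.
-/

theorem Nat.log_two_eq_of_eq_two_pow_add {k m j : ℕ} (h : k = 2 ^ m + j) (hj : j < 2 ^ m) :
    Nat.log 2 k = m :=
  Nat.log_eq_of_pow_le_of_lt_pow (by omega) (by rw [pow_succ]; omega)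

theorem Nat.exists_eq_two_pow_add {k : ℕ} (hk : k ≠ 0) : ∃ m j, k = 2 ^ m + j ∧ j < 2 ^ m :=
  ⟨Nat.log 2 k, k - 2 ^ Nat.log 2 k, by
    have h₁ := Nat.pow_log_le_self 2 hk
    have h₂ := Nat.lt_pow_succ_log_self one_lt_two k
    rw [pow_succ] at h₂
    omega⟩

section

variable {ω : ℤ × ℕ → Bool} {v w : ℕ → ℤ}

theorem MinPathZ.isPathZ (h : MinPathZ ω v) : IsPathZ v := by
  intro n
  have := h n
  split_ifs at this <;> omega

theorem MaxPathZ.isPathZ (h : MaxPathZ ω v) : IsPathZ v := by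
  intro n
  have := h n
  split_ifs at this <;> omega

theorem MaxPathZ.monotone (h : MaxPathZ ω v) : Monotone v :=
  monotone_nat_of_le_succ fun n => by
    have := h n
    split_ifs at this <;> omega

theorem MaxPathZ.step (h : MaxPathZ ω v) (n : ℕ) :
    (v (n + 1) = v n ∧ ω (v n, n + 1) = true) ∨
      (v (n + 1) = v n + 1 ∧ ω (v n + 1, n + 1) = false) := by
  have hn := h n
  cases hω : ω (v (n + 1), n + 1) <;> simp only [hω, Bool.false_eq_true, reduceIte] at hn
  · exact .inr ⟨by omega, by rwa [show v n + 1 = v (n + 1) by omega]⟩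
  · exact .inl ⟨by omega, by rwa [show v n = v (n + 1) by omega]⟩

theorem MaxPathZ.branch (hv : MaxPathZ ω v) (hw : MaxPathZ ω w) {n : ℕ} (h : v n = w n)
    (hne : v (n + 1) ≠ w (n + 1)) :
    ω (v n, n + 1) = true ∧ ω (v n + 1, n + 1) = false := by
  rcases hv.step n with ⟨hv₁, hvω⟩ | ⟨hv₁, hvω⟩ <;>
    rcases hw.step n with ⟨hw₁, hwω⟩ | ⟨hw₁, hwω⟩
  · exact absurd (by rw [hv₁, hw₁, h]) hne
  · exact ⟨hvω, h ▸ hwω⟩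
  · exact ⟨h ▸ hwω, hvω⟩
  · exact absurd (by rw [hv₁, hw₁, h]) hne

end

def sawtooth (k : ℕ) : ℕ := 2 * (k - 2 ^ Nat.log 2 k) + 1

theorem sawtooth_eq {k m j : ℕ} (h : k = 2 ^ m + j) (hj : j < 2 ^ m) :
    sawtooth k = 2 * j + 1 := by
  rw [sawtooth, Nat.log_two_eq_of_eq_two_pow_add h hj]
  omega

def sawtoothOrder (p : ℤ × ℕ) : Bool := decide (p.1 < 0 ∨ (sawtooth p.2 : ℤ) ≤ p.1)

theorem sawtoothOrder_branch {j : ℤ} {k : ℕ} (h₁ : sawtoothOrder (j, k) = true)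
    (h₂ : sawtoothOrder (j + 1, k) = false) : j = -1 := by
  simp only [sawtoothOrder, decide_eq_true_eq, decide_eq_false_iff_not] at h₁ h₂
  omega

def binaryPrefix (x : ℕ → Bool) : ℕ → ℕ
  | 0 => 0
  | m + 1 => 2 * binaryPrefix x m + (x m).toNat

theorem binaryPrefix_lt (x : ℕ → Bool) (m : ℕ) : binaryPrefix x m < 2 ^ m := by
  induction m with
  | zero => simp [binaryPrefix]
  | succ m ih =>
    have := Bool.toNat_le (x m)
    rw [binaryPrefix, pow_succ]
    omega

theorem binaryPrefix_injective : Function.Injective binaryPrefix := by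
  intro x y h
  funext m
  have hm := congrFun h (m + 1)
  simp only [binaryPrefix, congrFun h m] at hm
  have hbit : (x m).toNat = (y m).toNat := by omega
  revert hbit
  cases x m <;> cases y m <;> decide

/-- Climbs from `r` to `2r` in `r` steps, then adds the bit `b` and freezes. -/
def phasePos (r : ℕ) (b : Bool) (j : ℕ) : ℕ := r + min j r + if r < j then b.toNat else 0

theorem phasePos_zero (r : ℕ) (b : Bool) : phasePos r b 0 = r := by
  simp [phasePos]

theorem phasePos_of_lt {r j : ℕ} (b : Bool) (h : r < j) : phasePos r b j = 2 * r + b.toNat := by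
  rw [phasePos, if_pos h]
  omega

theorem phasePos_succ (r : ℕ) (b : Bool) (j : ℕ) :
    phasePos r b (j + 1) =
      phasePos r b j + if 2 * j + 1 ≤ phasePos r b (j + 1) then 1 else 0 := by
  have := Bool.toNat_le b
  unfold phasePos
  split_ifs <;> omega

def treePath (x : ℕ → Bool) (n : ℕ) : ℕ :=
  phasePos (binaryPrefix x (Nat.log 2 (n + 1))) (x (Nat.log 2 (n + 1)))
    (n + 1 - 2 ^ Nat.log 2 (n + 1))

theorem treePath_eq (x : ℕ → Bool) {n m j : ℕ} (h : n + 1 = 2 ^ m + j) (hj : j < 2 ^ m) :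
    treePath x n = phasePos (binaryPrefix x m) (x m) j := by
  rw [treePath, Nat.log_two_eq_of_eq_two_pow_add h hj, show n + 1 - 2 ^ m = j by omega]

theorem treePath_succ_eq (x : ℕ → Bool) {n m j : ℕ} (h : n + 1 = 2 ^ m + j) (hj : j < 2 ^ m) :
    treePath x (n + 1) = phasePos (binaryPrefix x m) (x m) (j + 1) := by
  by_cases hj' : j + 1 < 2 ^ m
  · exact treePath_eq x (by omega) hj'
  · have := binaryPrefix_lt x m
    rw [treePath_eq x (m := m + 1) (j := 0) (by rw [pow_succ]; omega) (by positivity),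
      phasePos_zero, phasePos_of_lt _ (by omega), binaryPrefix]

theorem treePath_two_pow_sub_one (x : ℕ → Bool) (m : ℕ) :
    treePath x (2 ^ m - 1) = binaryPrefix x m := by
  have := Nat.one_le_two_pow (n := m)
  rw [treePath_eq x (m := m) (j := 0) (by omega) (by positivity), phasePos_zero]

theorem treePath_injective : Function.Injective treePath := fun x y h =>
  binaryPrefix_injective <| funext fun m => by
    rw [← treePath_two_pow_sub_one, ← treePath_two_pow_sub_one, h]

theorem minPathZ_treePath (x : ℕ → Bool) :
    MinPathZ sawtoothOrder (fun n => (treePath x n : ℤ)) := by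
  intro n
  obtain ⟨m, j, h, hj⟩ := Nat.exists_eq_two_pow_add n.succ_ne_zero
  have hstep := phasePos_succ (binaryPrefix x m) (x m) j
  simp only [treePath_eq x h hj, treePath_succ_eq x h hj, sawtoothOrder, sawtooth_eq h hj,
    decide_eq_true_eq]
  split_ifs at hstep ⊢ <;> omega

open Cardinal in
theorem mk_minPathZ_sawtoothOrder :
    #{v : ℕ → ℤ | IsPathZ v ∧ MinPathZ sawtoothOrder v} = 𝔠 := by
  refine le_antisymm ?_ ?_
  · calc #{v : ℕ → ℤ | IsPathZ v ∧ MinPathZ sawtoothOrder v} ≤ #(ℕ → ℤ) := mk_subtype_le _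
      _ = 𝔠 := by rw [← power_def, mk_int, mk_nat, aleph0_power_aleph0]
  · calc 𝔠 = #(ℕ → Bool) := by rw [← power_def, mk_bool, mk_nat, two_power_aleph0]
      _ ≤ _ := mk_le_of_injective (f := fun x =>
          ⟨_, (minPathZ_treePath x).isPathZ, minPathZ_treePath x⟩) fun x y h =>
        treePath_injective <| funext fun n => by
          simpa using congrFun (congrArg Subtype.val h) n

noncomputable def firstNonneg (v : ℕ → ℤ) : ℕ := sInf {n | 0 ≤ v n}

theorem firstNonneg_eq_succ_iff {v : ℕ → ℤ} (hv : Monotone v) {n : ℕ} (hn : v n < 0) :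
    firstNonneg v = n + 1 ↔ 0 ≤ v (n + 1) := by
  rw [firstNonneg, Nat.sInf_upward_closed_eq_succ_iff fun a b hab ha => ha.trans (hv hab)]
  simp [hn]

/-- A maximal path for `sawtoothOrder` only has a choice at vertex `-1`, between staying there
and moving up to `0`; so it is determined by its start and by when it becomes nonnegative. -/
theorem MaxPathZ.eq_of_sawtoothOrder {v w : ℕ → ℤ} (hv : MaxPathZ sawtoothOrder v)
    (hw : MaxPathZ sawtoothOrder w) (h₀ : v 0 = w 0) (h : firstNonneg v = firstNonneg w) :
    v = w := by
  funext n
  induction n with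
  | zero => exact h₀
  | succ n ih =>
    by_contra hne
    obtain ⟨h₁, h₂⟩ := hv.branch hw ih hne
    have hvn : v n = -1 := sawtoothOrder_branch h₁ h₂
    have hcross : 0 ≤ v (n + 1) ↔ 0 ≤ w (n + 1) := by
      rw [← firstNonneg_eq_succ_iff hv.monotone (by omega), h,
        firstNonneg_eq_succ_iff hw.monotone (by omega)]
    rcases hv.isPathZ n with hv₁ | hv₁ <;> rcases hw.isPathZ n with hw₁ | hw₁ <;>
      rw [hv₁, hw₁] at hcross <;> omega

theorem maxPathZ_sawtoothOrder_const {c : ℤ} (hc : c < 0) :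
    MaxPathZ sawtoothOrder fun _ => c := by
  intro n
  simp [sawtoothOrder, hc]

open Cardinal in
theorem mk_maxPathZ_sawtoothOrder :
    #{v : ℕ → ℤ | IsPathZ v ∧ MaxPathZ sawtoothOrder v} = ℵ₀ := by
  have : Countable {v : ℕ → ℤ | IsPathZ v ∧ MaxPathZ sawtoothOrder v} :=
    Function.Injective.countable (f := fun v => (v.1 0, firstNonneg v.1)) fun v w h =>
      Subtype.ext <| v.2.2.eq_of_sawtoothOrder w.2.2 (congrArg Prod.fst h) (congrArg Prod.snd h)
  have : Infinite {v : ℕ → ℤ | IsPathZ v ∧ MaxPathZ sawtoothOrder v} :=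
    Infinite.of_injective (fun i : ℕ => ⟨fun _ => -1 - (i : ℤ), (maxPathZ_sawtoothOrder_const
        (by omega)).isPathZ, maxPathZ_sawtoothOrder_const (by omega)⟩) fun i j h => by
      simpa using congrFun (congrArg Subtype.val h) 0
  exact mk_eq_aleph0 _

/-- there is an order on `B̃` with continuum many minimal infinite paths and
countably infinitely many maximal infinite paths. -/
theorem two_sided_order_continuum_min_countable_max :
    ∃ ω : ℤ × ℕ → Bool,
      Cardinal.mk {v : ℕ → ℤ | IsPathZ v ∧ MinPathZ ω v} = Cardinal.continuum ∧
      Cardinal.mk {v : ℕ → ℤ | IsPathZ v ∧ MaxPathZ ω v} = Cardinal.aleph0 :=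
  ⟨sawtoothOrder, mk_minPathZ_sawtoothOrder, mk_maxPathZ_sawtoothOrder⟩
end
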